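/- arXiv:1101.0638 — 7 statements merged into one kernel-verified Lean document; each statement's English description precedes it below -/
import Mathlib

section
/- Let u be a smooth convex function on an open convex set P ⊂ ℝⁿ satisfying the M-condition. Let p' and p be points such that the segment from p' to 2p − p' (with midpoint p) lies in the closure of P. Then the Riemannian length of the straight segment from p' to p, measured in the Hessian metric g = Hess(u), is at most (1/(√2 − 1))·√(M·|p − p'|), where |p − p'| is the Euclidean distance. -/
open scoped BigOperators

noncomputable section

variable {n : ℕ}

/-- The Hessian of `u` at `x`, as a bilinear expression `Hess(u)(x)(v,w)`. -/
def Hbil (u : EuclideanSpace ℝ (Fin n) → ℝ) (x v w : EuclideanSpace ℝ (Fin n)) : ℝ :=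
  fderiv ℝ (fun y => fderiv ℝ u y v) x w

/-- Donaldson's `M`-condition on `P`: for all distinct `p, q ∈ P` whose tripled
segment `I(p,q) = {(p+q)/2 + t(p−q) : −3/2 ≤ t ≤ 3/2}` lies in `P`, the
difference of directional derivatives of `u` in the unit direction `ν` from
`p` to `q` is at most `M`. -/
def MCondE (P : Set (EuclideanSpace ℝ (Fin n)))
    (u : EuclideanSpace ℝ (Fin n) → ℝ) (M : ℝ) : Prop :=
  ∀ p q : EuclideanSpace ℝ (Fin n), p ∈ P → q ∈ P → p ≠ q →
    (∀ t : ℝ, t ∈ Set.Icc (-(3 : ℝ)/2) (3/2) →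
      midpoint ℝ p q + t • (p - q) ∈ P) →
    fderiv ℝ u q (‖q - p‖⁻¹ • (q - p)) - fderiv ℝ u p (‖q - p‖⁻¹ • (q - p)) ≤ M

/-- The Riemannian length of a path `γ : [0,1] → ℝⁿ` in the Hessian metric
`g = Hess(u)`. -/
def glen (u : EuclideanSpace ℝ (Fin n) → ℝ) (γ : ℝ → EuclideanSpace ℝ (Fin n)) : ℝ :=
  ∫ t in (0:ℝ)..1, Real.sqrt (Hbil u (γ t) (deriv γ t) (deriv γ t))

/-- The Riemannian distance in the Hessian metric between `p` and `q`,
taken over `C¹` paths staying in `S`. -/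
def gdist (u : EuclideanSpace ℝ (Fin n) → ℝ) (S : Set (EuclideanSpace ℝ (Fin n)))
    (p q : EuclideanSpace ℝ (Fin n)) : ℝ :=
  sInf {L : ℝ | ∃ γ : ℝ → EuclideanSpace ℝ (Fin n),
    ContDiffOn ℝ 1 γ (Set.Icc 0 1) ∧ γ 0 = p ∧ γ 1 = q ∧
    (∀ t ∈ Set.Icc (0:ℝ) 1, γ t ∈ S) ∧ L = glen u γ}

end

open MeasureTheory Set Filter Topology

noncomputable section

lemma lint_deriv_le (s : Set ℝ) (hs : MeasurableSet s)
    (F H : ℝ → ℝ)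
    (hF : ∀ t ∈ s, HasDerivAt F (H t) t)
    (hmono : ∀ t₁ ∈ s, ∀ t₂ ∈ s, t₁ ≤ t₂ → 0 ≤ F t₂ - F t₁)
    (K : ℝ) (hK : 0 ≤ K)
    (hbdd : ∀ t₁ ∈ s, ∀ t₂ ∈ s, t₁ ≤ t₂ → F t₂ - F t₁ ≤ K)
    (L : ℝ) (hL : 0 < L) (hsub : s ⊆ Icc 0 L) :
    ∫⁻ t in s, ENNReal.ofReal (H t) ≤ ENNReal.ofReal K := by
  refine ENNReal.le_of_forall_pos_le_add (fun ε hε _ => ?_)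
  set ε' : ℝ := (ε : ℝ) / (L + 1) with hε'
  have hε'pos : 0 < ε' := div_pos (by exact_mod_cast hε) (by linarith)
  have key : ∫⁻ t in s, ENNReal.ofReal (H t) ≤ ENNReal.ofReal (K + ε' * L) := by
    set G : ℝ → ℝ := fun t => F t + ε' * t with hG
    have hgmono : ∀ t₁ ∈ s, ∀ t₂ ∈ s, t₁ ≤ t₂ → G t₂ - G t₁ ≤ K + ε' * L := by
      intro t₁ h₁ t₂ h₂ h12
      have h1 := hbdd t₁ h₁ t₂ h₂ h12
      have hl1 := (hsub h₁).1; have hl2 := (hsub h₂).2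
      have : ε' * (t₂ - t₁) ≤ ε' * L := by
        apply mul_le_mul_of_nonneg_left _ hε'pos.le; linarith
      simp only [hG]; nlinarith
    have hgmono0 : ∀ t₁ ∈ s, ∀ t₂ ∈ s, t₁ < t₂ → G t₁ < G t₂ := by
      intro t₁ h₁ t₂ h₂ h12
      have := hmono t₁ h₁ t₂ h₂ h12.le
      have : ε' * t₁ < ε' * t₂ := by exact (mul_lt_mul_iff_right₀ hε'pos).mpr h12
      simp only [hG]; linarith
    have hInj : InjOn G s := by
      intro t₁ h₁ t₂ h₂ h
      by_contra hne
      rcases lt_or_gt_of_ne hne with hlt | hlt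
      · exact absurd h (hgmono0 t₁ h₁ t₂ h₂ hlt).ne
      · exact absurd h.symm (hgmono0 t₂ h₂ t₁ h₁ hlt).ne
    have hder : ∀ t ∈ s, HasDerivWithinAt G (H t + ε') s t := by
      intro t ht
      have h := ((hF t ht).add ((hasDerivAt_id t).const_mul ε')).hasDerivWithinAt (s := s)
      simp only [mul_one] at h; exact h
    have step1 : ∫⁻ t in s, ENNReal.ofReal (H t)
        ≤ ∫⁻ t in s, ENNReal.ofReal |H t + ε'| := by
      apply lintegral_mono
      intro t
      apply ENNReal.ofReal_le_ofReal
      rcases le_or_gt (H t) 0 with h | h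
      · calc H t ≤ 0 := h
          _ ≤ |H t + ε'| := abs_nonneg _
      · calc H t ≤ H t + ε' := by linarith
          _ ≤ |H t + ε'| := le_abs_self _
    have step2 : ∫⁻ t in s, ENNReal.ofReal |H t + ε'| ≤ volume (G '' s) := by
      have := lintegral_abs_det_fderiv_le_addHaar_image volume hs
        (f := G) (f' := fun t => (1 : ℝ →L[ℝ] ℝ).smulRight (H t + ε'))
        (fun t ht => (hder t ht).hasFDerivWithinAt) hInj
      simpa only [ContinuousLinearMap.det_smulRight, ContinuousLinearMap.one_apply, one_mul] using this
    have step3 : volume (G '' s) ≤ ENNReal.ofReal (K + ε' * L) := by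
      rcases s.eq_empty_or_nonempty with rfl | ⟨t₀, ht₀⟩
      · simp
      · have hne : (G '' s).Nonempty := ⟨G t₀, ⟨t₀, ht₀, rfl⟩⟩
        have hbd : BddBelow (G '' s) := by
          refine ⟨G t₀ - (K + ε' * L), ?_⟩
          rintro x ⟨t, ht, rfl⟩
          rcases le_total t t₀ with h | h
          · have := hgmono t ht t₀ ht₀ h; linarith
          · have h0 := hmono t₀ ht₀ t ht h
            have : ε' * t₀ ≤ ε' * t := mul_le_mul_of_nonneg_left h hε'pos.le
            have hKL : 0 ≤ K + ε' * L := by positivity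
            simp only [hG] at *; linarith
        set m := sInf (G '' s) with hm
        have hsubI : G '' s ⊆ Icc m (m + (K + ε' * L)) := by
          rintro x hx
          refine ⟨csInf_le hbd hx, ?_⟩
          have : x - (K + ε' * L) ≤ m := by
            apply le_csInf hne
            rintro y ⟨t', ht', rfl⟩
            obtain ⟨t, ht, rfl⟩ := hx
            rcases le_total t t' with h | h
            · have h0 := hmono t ht t' ht' h
              have : ε' * t ≤ ε' * t' := mul_le_mul_of_nonneg_left h hε'pos.le
              have hKL : 0 ≤ K + ε' * L := by positivity
              simp only [hG] at *; linarith
            · have := hgmono t' ht' t ht h; linarith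
          linarith
        calc volume (G '' s) ≤ volume (Icc m (m + (K + ε' * L))) := measure_mono hsubI
          _ = ENNReal.ofReal (K + ε' * L) := by rw [Real.volume_Icc]; ring_nf
    exact step1.trans (step2.trans step3)
  refine key.trans ?_
  have h1 : K + ε' * L ≤ K + ε := by
    have : ε' * L ≤ (ε : ℝ) := by
      rw [hε', div_mul_eq_mul_div, div_le_iff₀ (by linarith)]
      nlinarith [ε.coe_nonneg]
    linarith
  calc ENNReal.ofReal (K + ε' * L) ≤ ENNReal.ofReal (K + ε) := ENNReal.ofReal_le_ofReal h1
    _ ≤ ENNReal.ofReal K + ENNReal.ofReal ε := ENNReal.ofReal_add_le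
    _ = ENNReal.ofReal K + ε := by rw [ENNReal.ofReal_coe_nnreal]

lemma sqrt_window (a K : ℝ) (ha : 0 < a) (hK : 0 ≤ K) (H : ℝ → ℝ) (hm : Measurable H)
    (hint : ∫⁻ t in Ioc a (2*a), ENNReal.ofReal (H t) ≤ ENNReal.ofReal K) :
    ∫⁻ t in Ioc a (2*a), ENNReal.ofReal (Real.sqrt (H t))
      ≤ ENNReal.ofReal (Real.sqrt K * Real.sqrt a) := by
  set μ := volume.restrict (Ioc a (2*a)) with hμ
  have hconj : Real.HolderConjugate 2 2 := Real.HolderConjugate.two_two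
  have hf : AEMeasurable (fun t => ENNReal.ofReal (Real.sqrt (H t))) μ :=
    (ENNReal.measurable_ofReal.comp (Real.continuous_sqrt.measurable.comp hm)).aemeasurable
  have hg : AEMeasurable (fun _ : ℝ => (1 : ENNReal)) μ := aemeasurable_const
  have hCS := ENNReal.lintegral_mul_le_Lp_mul_Lq μ hconj hf hg
  simp only [mul_one, ENNReal.one_rpow] at hCS
  have hμuniv : μ univ = ENNReal.ofReal a := by
    rw [hμ, Measure.restrict_apply MeasurableSet.univ, univ_inter, Real.volume_Ioc]
    ring_nf
  have hsq : ∀ t, (ENNReal.ofReal (Real.sqrt (H t))) ^ (2:ℝ) = ENNReal.ofReal (H t) := by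
    intro t
    rw [ENNReal.ofReal_rpow_of_nonneg (Real.sqrt_nonneg _) (by norm_num)]
    rcases le_or_gt 0 (H t) with h | h
    · congr 1
      rw [show ((2:ℝ)) = ((2:ℕ):ℝ) by norm_num, Real.rpow_natCast, Real.sq_sqrt h]
    · rw [Real.sqrt_eq_zero_of_nonpos h.le, Real.zero_rpow (by norm_num)]
      rw [ENNReal.ofReal_zero, Eq.comm, ENNReal.ofReal_eq_zero]
      exact h.le
  have hCS' : (∫⁻ t, ENNReal.ofReal (Real.sqrt (H t)) ∂μ)
      ≤ (∫⁻ t, ENNReal.ofReal (Real.sqrt (H t)) ^ (2:ℝ) ∂μ) ^ ((1:ℝ)/2)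
        * (∫⁻ _t, (1:ENNReal) ∂μ) ^ ((1:ℝ)/2) := by
    convert hCS using 2 <;> simp
  calc ∫⁻ t in Ioc a (2*a), ENNReal.ofReal (Real.sqrt (H t))
      ≤ (∫⁻ t, ENNReal.ofReal (Real.sqrt (H t)) ^ (2:ℝ) ∂μ) ^ ((1:ℝ)/2)
        * (∫⁻ _t, (1:ENNReal) ∂μ) ^ ((1:ℝ)/2) := hCS'
    _ = (∫⁻ t, ENNReal.ofReal (H t) ∂μ) ^ ((1:ℝ)/2) * (ENNReal.ofReal a) ^ ((1:ℝ)/2) := by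
        rw [lintegral_one, hμuniv]
        congr 1
        rw [lintegral_congr hsq]
    _ ≤ (ENNReal.ofReal K) ^ ((1:ℝ)/2) * (ENNReal.ofReal a) ^ ((1:ℝ)/2) := by
        gcongr
    _ = ENNReal.ofReal (Real.sqrt K * Real.sqrt a) := by
        rw [ENNReal.ofReal_rpow_of_nonneg hK (by norm_num),
          ENNReal.ofReal_rpow_of_nonneg ha.le (by norm_num),
          ← ENNReal.ofReal_mul (by positivity)]
        rw [Real.sqrt_eq_rpow, Real.sqrt_eq_rpow]

lemma sqrt_pow_aux (x : ℝ) (hx : 0 ≤ x) (k : ℕ) :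
    Real.sqrt (x ^ k) = (Real.sqrt x) ^ k := by
  induction k with
  | zero => simp
  | succ k ih => rw [pow_succ, pow_succ, Real.sqrt_mul (by positivity), ih]

set_option maxHeartbeats 1600000 in
/-- if `u` satisfies the `M`-condition on `P` and the segment
from `p'` to `2p − p'` (midpoint `p`) lies in the closure of `P`, then the
Riemannian length (in `g = Hess u`) of the straight segment from `p'` to `p`
is at most `(√2 − 1)⁻¹ √(M |p − p'|)`. -/
theorem stmt1 (n : ℕ) (P : Set (EuclideanSpace ℝ (Fin n)))
    (hP : IsOpen P) (hPc : Convex ℝ P)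
    (u : EuclideanSpace ℝ (Fin n) → ℝ)
    (hsmooth : ContDiffOn ℝ (⊤ : ℕ∞) u P) (hconv : ConvexOn ℝ P u)
    (hstrict : ∀ x ∈ P, ∀ v : EuclideanSpace ℝ (Fin n), v ≠ 0 → 0 < Hbil u x v v)
    (M : ℝ) (hM : MCondE P u M)
    (p p' : EuclideanSpace ℝ (Fin n)) (hne : p ≠ p')
    (hseg : segment ℝ p' ((2 : ℝ) • p - p') ⊆ closure P) :
    (∫ t in (0:ℝ)..1,
        Real.sqrt (Hbil u (p' + t • (p - p')) (p - p') (p - p'))) ≤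
      (Real.sqrt 2 - 1)⁻¹ * Real.sqrt (M * ‖p - p'‖) := by
  classical
  have sqrt2_gt : (1:ℝ) < Real.sqrt 2 := by
    rw [show (1:ℝ) = Real.sqrt 1 by rw [Real.sqrt_one]]
    exact Real.sqrt_lt_sqrt (by norm_num) (by norm_num)
  set v : EuclideanSpace ℝ (Fin n) := p - p' with hv
  have hvne : v ≠ 0 := sub_ne_zero.mpr hne
  set c : ℝ := ‖v‖ with hcdef
  have hcpos : 0 < c := norm_pos_iff.mpr hvne
  set γ : ℝ → EuclideanSpace ℝ (Fin n) := fun t => p' + t • v with hγdef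
  set g : EuclideanSpace ℝ (Fin n) → ℝ := fun z => fderiv ℝ u z v with hgdef
  set H : ℝ → ℝ := fun t => fderiv ℝ g (γ t) v with hHdef
  -- the curve parameters in [0,2] land in the closure of P
  have h02 : ∀ t ∈ Icc (0:ℝ) 2, γ t ∈ closure P := by
    intro t ht
    apply hseg
    rw [segment_eq_image']
    refine ⟨t/2, ⟨by linarith [ht.1], by linarith [ht.2]⟩, ?_⟩
    show p' + (t/2) • ((2:ℝ) • p - p' - p') = γ t
    have h2 : (2:ℝ) • p - p' - p' = (2:ℝ) • v := by
      simp only [hv]; module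
    rw [h2, smul_smul]
    show p' + (t / 2 * 2) • v = p' + t • v
    norm_num
  -- a point of P
  have hPne : P.Nonempty := by
    rw [← closure_nonempty_iff]
    exact ⟨p', hseg (left_mem_segment ℝ _ _)⟩
  obtain ⟨z₀, hz₀⟩ := hPne
  -- interior approximations of the curve
  set γδ : ℝ → ℝ → EuclideanSpace ℝ (Fin n) :=
    fun δ t => (p' + δ • (z₀ - p')) + t • ((1 - δ) • v) with hγδdef
  have hγδP : ∀ δ, 0 < δ → δ ≤ 1 → ∀ t ∈ Icc (0:ℝ) 2, γδ δ t ∈ P := by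
    intro δ hδ0 hδ1 t ht
    have hz₀' : z₀ ∈ interior P := by rw [hP.interior_eq]; exact hz₀
    have h := hPc.combo_interior_closure_mem_interior (a := δ) (b := 1 - δ)
      hz₀' (h02 t ht) hδ0 (by linarith) (by ring)
    rw [hP.interior_eq] at h
    have heq : γδ δ t = δ • z₀ + (1 - δ) • γ t := by
      rw [hγδdef, hγdef]
      simp only
      module
    rw [heq]; exact h
  set Λ : ℝ → ℝ → ℝ := fun δ t => g (γδ δ t) with hΛdef
  have hudiff : ∀ x ∈ P, DifferentiableAt ℝ u x := fun x hx =>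
    (hsmooth.contDiffAt (hP.mem_nhds hx)).differentiableAt (by simp)
  -- derivative of the composition along interior lines
  have hφderiv : ∀ δ, 0 < δ → δ ≤ 1 → ∀ s ∈ Icc (0:ℝ) 2,
      HasDerivAt (fun s => u (γδ δ s)) ((1 - δ) * Λ δ s) s := by
    intro δ hδ0 hδ1 s hs
    have hpt : γδ δ s ∈ P := hγδP δ hδ0 hδ1 s hs
    have hcurve : HasDerivAt (fun s : ℝ => γδ δ s) ((1 - δ) • v) s := by
      have h1 : HasDerivAt (fun s : ℝ => s • ((1 - δ) • v)) ((1 - δ) • v) s := by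
        simpa using (hasDerivAt_id s).smul_const ((1 - δ) • v)
      exact h1.const_add _
    have hcomp := ((hudiff _ hpt).hasFDerivAt).comp_hasDerivAt s hcurve
    have : fderiv ℝ u (γδ δ s) ((1 - δ) • v) = (1 - δ) * Λ δ s := by
      rw [(fderiv ℝ u (γδ δ s)).map_smul, smul_eq_mul, hΛdef, hgdef]
    rwa [this] at hcomp
  -- monotonicity of Λ δ in t
  have hmonoΛ : ∀ δ, 0 < δ → δ < 1 → ∀ t₁ ∈ Icc (0:ℝ) 2, ∀ t₂ ∈ Icc (0:ℝ) 2,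
      t₁ ≤ t₂ → Λ δ t₁ ≤ Λ δ t₂ := by
    intro δ hδ0 hδ1 t₁ h₁ t₂ h₂ h12
    rcases eq_or_lt_of_le h12 with rfl | hlt
    · exact le_refl _
    · set A : ℝ →ᵃ[ℝ] EuclideanSpace ℝ (Fin n) := AffineMap.lineMap (γδ δ 0) (γδ δ 1) with hA
      have hAs : ∀ s : ℝ, A s = γδ δ s := by
        intro s
        rw [hA, AffineMap.lineMap_apply]
        rw [hγδdef]
        simp only [vsub_eq_sub, vadd_eq_add]
        module
      have hconvφ : ConvexOn ℝ (Icc (0:ℝ) 2) (fun s => u (γδ δ s)) := by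
        have h1 := hconv.comp_affineMap A
        have h2 : ConvexOn ℝ (Icc (0:ℝ) 2) (u ∘ A) :=
          h1.subset (fun s hs => by
            show A s ∈ P
            rw [hAs]; exact hγδP δ hδ0 hδ1.le s hs) (convex_Icc _ _)
        have heq : (u ∘ A) = fun s => u (γδ δ s) :=
          funext fun s => by rw [Function.comp_apply, hAs]
        rwa [heq] at h2
      have hd1 := hφderiv δ hδ0 hδ1.le t₁ h₁
      have hd2 := hφderiv δ hδ0 hδ1.le t₂ h₂
      have hle := (hconvφ.le_slope_of_hasDerivAt h₁ h₂ hlt hd1).trans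
        (hconvφ.slope_le_of_hasDerivAt h₁ h₂ hlt hd2)
      have h1δ : 0 < 1 - δ := by linarith
      exact le_of_mul_le_mul_left hle h1δ
  -- increment bound from the M-condition
  have hincΛ : ∀ δ, 0 < δ → δ < 1 → ∀ t₁ t₂ : ℝ, t₁ < t₂ → 0 ≤ 2*t₁ - t₂ → 2*t₂ - t₁ ≤ 2 →
      Λ δ t₂ - Λ δ t₁ ≤ M * c := by
    intro δ hδ0 hδ1 t₁ t₂ hlt hc1 hc2
    have ht₁ : t₁ ∈ Icc (0:ℝ) 2 := ⟨by linarith, by linarith⟩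
    have ht₂ : t₂ ∈ Icc (0:ℝ) 2 := ⟨by linarith, by linarith⟩
    have hpmem : γδ δ t₁ ∈ P := hγδP δ hδ0 hδ1.le t₁ ht₁
    have hqmem : γδ δ t₂ ∈ P := hγδP δ hδ0 hδ1.le t₂ ht₂
    have hwv : γδ δ t₂ - γδ δ t₁ = ((t₂ - t₁) * (1 - δ)) • v := by
      rw [hγδdef]; simp only; module
    have hco : 0 < (t₂ - t₁) * (1 - δ) := by nlinarith
    have hpqne : γδ δ t₁ ≠ γδ δ t₂ := by
      intro h
      have h0 : γδ δ t₂ - γδ δ t₁ = 0 := by rw [h]; exact sub_self _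
      rw [hwv] at h0
      rcases smul_eq_zero.mp h0 with h' | h'
      · exact hco.ne' h'
      · exact hvne h'
    have htrip : ∀ s : ℝ, s ∈ Icc (-(3:ℝ)/2) (3/2) →
        midpoint ℝ (γδ δ t₁) (γδ δ t₂) + s • (γδ δ t₁ - γδ δ t₂) ∈ P := by
      intro s hs
      have hmid : midpoint ℝ (γδ δ t₁) (γδ δ t₂) + s • (γδ δ t₁ - γδ δ t₂)
          = γδ δ ((t₁+t₂)/2 + s * (t₁ - t₂)) := by
        rw [midpoint_eq_smul_add, hγδdef]
        simp only [invOf_eq_inv]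
        module
      rw [hmid]
      apply hγδP δ hδ0 hδ1.le
      have hb1 := mul_le_mul_of_nonneg_right hs.1 (by linarith : (0:ℝ) ≤ t₂ - t₁)
      have hb2 := mul_le_mul_of_nonneg_right hs.2 (by linarith : (0:ℝ) ≤ t₂ - t₁)
      constructor
      · nlinarith
      · nlinarith
    have happ := hM (γδ δ t₁) (γδ δ t₂) hpmem hqmem hpqne htrip
    have hnorm : ‖γδ δ t₂ - γδ δ t₁‖ = (t₂ - t₁) * (1 - δ) * c := by
      rw [hwv, norm_smul, Real.norm_eq_abs, abs_of_pos hco, hcdef]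
    have hν : ‖γδ δ t₂ - γδ δ t₁‖⁻¹ • (γδ δ t₂ - γδ δ t₁) = c⁻¹ • v := by
      rw [hnorm, hwv, smul_smul]
      congr 1
      field_simp
      exact div_self hco.ne'
    rw [hν] at happ
    have happ2 : c⁻¹ * Λ δ t₂ - c⁻¹ * Λ δ t₁ ≤ M := by
      have e1 : fderiv ℝ u (γδ δ t₂) (c⁻¹ • v) = c⁻¹ * Λ δ t₂ := by
        rw [(fderiv ℝ u _).map_smul, smul_eq_mul]
      have e2 : fderiv ℝ u (γδ δ t₁) (c⁻¹ • v) = c⁻¹ * Λ δ t₁ := by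
        rw [(fderiv ℝ u _).map_smul, smul_eq_mul]
      rwa [e1, e2] at happ
    have hcM := mul_le_mul_of_nonneg_left happ2 hcpos.le
    calc Λ δ t₂ - Λ δ t₁ = c * (c⁻¹ * Λ δ t₂ - c⁻¹ * Λ δ t₁) := by
          field_simp
      _ ≤ c * M := hcM
      _ = M * c := mul_comm _ _
  -- the boundary trace function and its regular set
  set F : ℝ → ℝ := fun t => g (γ t) with hFdef
  set S : Set ℝ := {t | DifferentiableAt ℝ g (γ t)} with hSdef
  have hγcont : Continuous γ := by
    rw [hγdef]; exact continuous_const.add (continuous_id.smul continuous_const)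
  have hSmeas : MeasurableSet S :=
    hγcont.measurable (measurableSet_of_differentiableAt ℝ g)
  have hH0 : ∀ t, t ∉ S → H t = 0 := by
    intro t ht
    have h0 : fderiv ℝ g (γ t) = 0 := fderiv_zero_of_not_differentiableAt ht
    show fderiv ℝ g (γ t) v = 0
    rw [h0]; rfl
  have hHder : ∀ t ∈ S, HasDerivAt F (H t) t := by
    intro t ht
    have ht' : DifferentiableAt ℝ g (γ t) := ht
    have hcurve : HasDerivAt γ v t := by
      have h1 : HasDerivAt (fun s : ℝ => p' + s • v) v t := by
        simpa using ((hasDerivAt_id t).smul_const v).const_add p'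
      exact h1
    exact (ht'.hasFDerivAt).comp_hasDerivAt t hcurve
  have htend : ∀ t, t ∈ S → Tendsto (fun δ => Λ δ t) (𝓝[>] (0:ℝ)) (𝓝 (F t)) := by
    intro t ht
    have ht' : DifferentiableAt ℝ g (γ t) := ht
    have hδcont : Continuous (fun δ : ℝ => γδ δ t) := by
      rw [hγδdef]
      simp only
      exact (continuous_const.add (continuous_id.smul continuous_const)).add
        (((continuous_const.sub continuous_id).smul continuous_const).const_smul t)
    have h0 : γδ 0 t = γ t := by
      rw [hγδdef, hγdef]
      simp only [zero_smul, add_zero, sub_zero, one_smul]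
    have h1 : Tendsto (fun δ : ℝ => γδ δ t) (𝓝 0) (𝓝 (γ t)) := by
      have := hδcont.tendsto 0
      rwa [h0] at this
    exact (ht'.continuousAt.tendsto).comp (h1.mono_left nhdsWithin_le_nhds)
  set K : ℝ := max (M * c) 0 with hKdef
  have hK0 : 0 ≤ K := le_max_right _ _
  have hpair : ∀ a : ℝ, 0 < a → 2*a ≤ 1 →
      ∀ t₁ ∈ S ∩ Ioc a (2*a), ∀ t₂ ∈ S ∩ Ioc a (2*a), t₁ ≤ t₂ →
      0 ≤ F t₂ - F t₁ ∧ F t₂ - F t₁ ≤ K := by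
    intro a ha h2a t₁ ht₁ t₂ ht₂ h12
    rcases eq_or_lt_of_le h12 with rfl | hlt
    · constructor
      · simp
      · simpa using hK0
    · have hIcc : ∀ s, s ∈ Ioc a (2*a) → s ∈ Icc (0:ℝ) 2 := fun s hs =>
        ⟨by linarith [hs.1], by linarith [hs.2]⟩
      have htt : Tendsto (fun δ => Λ δ t₂ - Λ δ t₁) (𝓝[>] (0:ℝ)) (𝓝 (F t₂ - F t₁)) :=
        (htend t₂ ht₂.1).sub (htend t₁ ht₁.1)
      have hev : ∀ᶠ δ in 𝓝[>] (0:ℝ), δ ∈ Ioo (0:ℝ) 1 :=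
        Ioo_mem_nhdsGT_of_mem ⟨le_refl 0, zero_lt_one⟩
      constructor
      · refine ge_of_tendsto htt ?_
        filter_upwards [hev] with δ hδ
        have := hmonoΛ δ hδ.1 hδ.2 t₁ (hIcc _ ht₁.2) t₂ (hIcc _ ht₂.2) h12
        linarith
      · refine le_of_tendsto htt ?_
        filter_upwards [hev] with δ hδ
        have h1 := hincΛ δ hδ.1 hδ.2 t₁ t₂ hlt
          (by linarith [ht₁.2.1, ht₂.2.2]) (by linarith [ht₁.2.1, ht₂.2.2])
        calc Λ δ t₂ - Λ δ t₁ ≤ M * c := h1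
          _ ≤ K := le_max_left _ _
  have hHmeas : Measurable H := by
    have h1 : Measurable fun z => fderiv ℝ g z v := measurable_fderiv_apply_const ℝ g v
    exact h1.comp hγcont.measurable
  have hwin : ∀ a : ℝ, 0 < a → 2*a ≤ 1 →
      ∫⁻ t in Ioc a (2*a), ENNReal.ofReal (H t) ≤ ENNReal.ofReal K := by
    intro a ha h2a
    have hsm : MeasurableSet (S ∩ Ioc a (2*a)) := hSmeas.inter measurableSet_Ioc
    have hsplit : ∫⁻ t in Ioc a (2*a), ENNReal.ofReal (H t)
        = ∫⁻ t in S ∩ Ioc a (2*a), ENNReal.ofReal (H t) := by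
      have hu : Ioc a (2*a) = (S ∩ Ioc a (2*a)) ∪ (Ioc a (2*a) \ S) := by
        ext x
        simp only [mem_inter_iff, mem_union, mem_diff]
        tauto
      have hdisj2 : Disjoint (S ∩ Ioc a (2*a)) (Ioc a (2*a) \ S) := by
        rw [Set.disjoint_left]
        rintro x ⟨hxS, _⟩ ⟨_, hxS'⟩
        exact hxS' hxS
      have hz : ∫⁻ t in Ioc a (2*a) \ S, ENNReal.ofReal (H t) = 0 := by
        have heq0 : ∀ t ∈ Ioc a (2*a) \ S, ENNReal.ofReal (H t) = 0 := fun t ht => by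
          rw [hH0 t ht.2, ENNReal.ofReal_zero]
        calc ∫⁻ t in Ioc a (2*a) \ S, ENNReal.ofReal (H t)
            = ∫⁻ _t in Ioc a (2*a) \ S, 0 :=
              setLIntegral_congr_fun (measurableSet_Ioc.diff hSmeas) heq0
          _ = 0 := by simp
      conv_lhs => rw [hu]
      rw [lintegral_union (measurableSet_Ioc.diff hSmeas) hdisj2, hz, add_zero]
    rw [hsplit]
    exact lint_deriv_le (S ∩ Ioc a (2*a)) hsm F H (fun t ht => hHder t ht.1)
      (fun t₁ h₁ t₂ h₂ h12 => (hpair a ha h2a t₁ h₁ t₂ h₂ h12).1)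
      K hK0 (fun t₁ h₁ t₂ h₂ h12 => (hpair a ha h2a t₁ h₁ t₂ h₂ h12).2)
      1 one_pos (fun t ht => ⟨by linarith [ht.2.1], by linarith [ht.2.2]⟩)
  -- dyadic decomposition
  set b : ℝ := (2:ℝ)⁻¹ with hbdef
  have hb0 : (0:ℝ) < b := by rw [hbdef]; norm_num
  have hb1 : b < 1 := by rw [hbdef]; norm_num
  have hcover : Ioc (0:ℝ) 1 = ⋃ k : ℕ, Ioc (b^(k+1)) (b^k) := by
    ext x
    simp only [mem_Ioc, mem_iUnion]
    constructor
    · rintro ⟨hx0, hx1⟩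
      have hex : ∃ m : ℕ, b ^ m < x := exists_pow_lt_of_lt_one hx0 hb1
      have hspec : b ^ (Nat.find hex) < x := Nat.find_spec hex
      have hm₀ : Nat.find hex ≠ 0 := by
        intro h
        rw [h, pow_zero] at hspec
        linarith
      obtain ⟨k, hk⟩ := Nat.exists_eq_succ_of_ne_zero hm₀
      refine ⟨k, ?_, ?_⟩
      · rw [← Nat.succ_eq_add_one, ← hk]; exact hspec
      · by_contra hgt
        push_neg at hgt
        exact Nat.find_min hex (by omega) hgt
    · rintro ⟨k, hk1, hk2⟩
      refine ⟨lt_of_le_of_lt (by positivity) hk1, le_trans hk2 ?_⟩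
      exact pow_le_one₀ hb0.le hb1.le
  have hdisj : Pairwise (Function.onFun Disjoint fun k : ℕ => Ioc (b^(k+1)) (b^k)) := by
    have haux : ∀ {i j : ℕ}, i < j → Disjoint (Ioc (b^(i+1)) (b^i)) (Ioc (b^(j+1)) (b^j)) := by
      intro i j hij
      apply Set.Ioc_disjoint_Ioc.mpr
      have h1 : b ^ j ≤ b ^ (i+1) := pow_le_pow_of_le_one hb0.le hb1.le (by omega)
      calc min (b^i) (b^j) ≤ b ^ j := min_le_right _ _
        _ ≤ b^(i+1) := h1
        _ ≤ max (b^(i+1)) (b^(j+1)) := le_max_left _ _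
    intro i j hij
    rcases lt_or_gt_of_ne hij with h | h
    · exact haux h
    · exact (haux h).symm
  have hsum : ∫⁻ t in Ioc (0:ℝ) 1, ENNReal.ofReal (Real.sqrt (H t))
      = ∑' k : ℕ, ∫⁻ t in Ioc (b^(k+1)) (b^k), ENNReal.ofReal (Real.sqrt (H t)) := by
    rw [hcover, lintegral_iUnion (fun _ => measurableSet_Ioc) hdisj]
  have hwinfinal : ∀ k : ℕ, ∫⁻ t in Ioc (b^(k+1)) (b^k), ENNReal.ofReal (Real.sqrt (H t))
      ≤ ENNReal.ofReal (Real.sqrt K) * (ENNReal.ofReal (Real.sqrt b))^(k+1) := by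
    intro k
    have ha : (0:ℝ) < b^(k+1) := by positivity
    have h2a : b^k = 2 * b^(k+1) := by
      rw [pow_succ, hbdef]; ring
    have h2a1 : 2 * b^(k+1) ≤ 1 := by
      rw [← h2a]; exact pow_le_one₀ hb0.le hb1.le
    rw [h2a]
    refine (sqrt_window (b^(k+1)) K ha hK0 H hHmeas (hwin _ ha h2a1)).trans (le_of_eq ?_)
    rw [sqrt_pow_aux b hb0.le (k+1), ENNReal.ofReal_mul (Real.sqrt_nonneg K),
      ENNReal.ofReal_pow (Real.sqrt_nonneg b)]
  have hsb : Real.sqrt b = (Real.sqrt 2)⁻¹ := by rw [hbdef, Real.sqrt_inv]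
  have hsb1 : Real.sqrt b < 1 := by
    rw [hsb]
    rw [inv_lt_one_iff₀]
    right; exact sqrt2_gt
  have hconst : ENNReal.ofReal (Real.sqrt b) * (1 - ENNReal.ofReal (Real.sqrt b))⁻¹
      = ENNReal.ofReal ((Real.sqrt 2 - 1)⁻¹) := by
    have h1 : (1: ENNReal) - ENNReal.ofReal (Real.sqrt b) = ENNReal.ofReal (1 - Real.sqrt b) := by
      rw [← ENNReal.ofReal_one]
      exact (ENNReal.ofReal_sub 1 (Real.sqrt_nonneg b)).symm
    rw [h1, ← ENNReal.ofReal_inv_of_pos (by linarith : (0:ℝ) < 1 - Real.sqrt b),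
      ← ENNReal.ofReal_mul (Real.sqrt_nonneg b)]
    congr 1
    rw [hsb, ← mul_inv]
    congr 1
    have hs0 : Real.sqrt 2 ≠ 0 := by positivity
    rw [mul_sub, mul_inv_cancel₀ hs0, mul_one]
  have hKsqrt : Real.sqrt K = Real.sqrt (M * c) := by
    rcases le_total (M*c) 0 with h | h
    · rw [hKdef, max_eq_right h, Real.sqrt_zero, Real.sqrt_eq_zero_of_nonpos h]
    · rw [hKdef, max_eq_left h]
  have hfinal : ∫⁻ t in Ioc (0:ℝ) 1, ENNReal.ofReal (Real.sqrt (H t))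
      ≤ ENNReal.ofReal ((Real.sqrt 2 - 1)⁻¹ * Real.sqrt (M * c)) := by
    rw [hsum]
    calc ∑' k : ℕ, ∫⁻ t in Ioc (b^(k+1)) (b^k), ENNReal.ofReal (Real.sqrt (H t))
        ≤ ∑' k : ℕ, ENNReal.ofReal (Real.sqrt K) * (ENNReal.ofReal (Real.sqrt b))^(k+1) :=
          ENNReal.tsum_le_tsum hwinfinal
      _ = ENNReal.ofReal (Real.sqrt K)
            * (ENNReal.ofReal (Real.sqrt b) * (1 - ENNReal.ofReal (Real.sqrt b))⁻¹) := by
          rw [ENNReal.tsum_mul_left, ENNReal.tsum_geometric_add_one]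
      _ = ENNReal.ofReal (Real.sqrt K) * ENNReal.ofReal ((Real.sqrt 2 - 1)⁻¹) := by
          rw [hconst]
      _ = ENNReal.ofReal ((Real.sqrt 2 - 1)⁻¹ * Real.sqrt (M * c)) := by
          rw [← ENNReal.ofReal_mul (Real.sqrt_nonneg K), hKsqrt, mul_comm]
  have hRHS0 : 0 ≤ (Real.sqrt 2 - 1)⁻¹ * Real.sqrt (M * c) :=
    mul_nonneg (inv_nonneg.mpr (by linarith)) (Real.sqrt_nonneg _)
  have hgoal : (∫ t in (0:ℝ)..1, Real.sqrt (Hbil u (p' + t • v) v v))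
      = ∫ t in (0:ℝ)..1, Real.sqrt (H t) := by
    apply intervalIntegral.integral_congr
    intro t _
    rfl
  have hIoc : (∫ t in (0:ℝ)..1, Real.sqrt (H t))
      = (∫⁻ t in Ioc (0:ℝ) 1, ENNReal.ofReal (Real.sqrt (H t))).toReal := by
    rw [intervalIntegral.integral_of_le zero_le_one]
    rw [integral_eq_lintegral_of_nonneg_ae (ae_of_all _ fun t => Real.sqrt_nonneg _)
      ((Real.continuous_sqrt.measurable.comp hHmeas).aestronglyMeasurable)]
  rw [hgoal, hIoc]
  calc (∫⁻ t in Ioc (0:ℝ) 1, ENNReal.ofReal (Real.sqrt (H t))).toReal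
      ≤ (ENNReal.ofReal ((Real.sqrt 2 - 1)⁻¹ * Real.sqrt (M * c))).toReal :=
        ENNReal.toReal_mono ENNReal.ofReal_ne_top hfinal
    _ = (Real.sqrt 2 - 1)⁻¹ * Real.sqrt (M * c) := ENNReal.toReal_ofReal hRHS0

end
end

section
/- Let u be a smooth convex function on a polytope P satisfying the M-condition, and let p ∈ P. Then the distance from p to ∂P in the Hessian metric g = Hess(u) satisfies Dist_g(p, ∂P) ≤ (1/(√2−1))·√(M · Dist_Euc(p, ∂P)). -/
open scoped BigOperators

open Set intervalIntegral

noncomputable section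

variable {n : ℕ}

lemma sqrt_int_le (f : ℝ → ℝ) (a b : ℝ) (hab : a < b)
    (hcont : ContinuousOn f (Set.Icc a b)) (hpos : ∀ t ∈ Set.Ioo a b, 0 < f t)
    (hnn : ∀ t ∈ Set.Icc a b, 0 ≤ f t) :
    ∫ t in a..b, Real.sqrt (f t) ≤ Real.sqrt ((b - a) * ∫ t in a..b, f t) := by
  have huIcc : Set.uIcc a b = Set.Icc a b := Set.uIcc_of_le hab.le
  have hfi : IntervalIntegrable f MeasureTheory.volume a b := by
    apply ContinuousOn.intervalIntegrable; rwa [huIcc]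
  set A : ℝ := ∫ t in a..b, f t with hA
  have hApos : 0 < A := intervalIntegral_pos_of_pos_on hfi hpos hab
  set l : ℝ := Real.sqrt A / Real.sqrt (b - a) with hl
  have hbapos : (0:ℝ) < b - a := by linarith
  have hsb : (0:ℝ) < Real.sqrt (b - a) := Real.sqrt_pos.2 hbapos
  have hsA : (0:ℝ) < Real.sqrt A := Real.sqrt_pos.2 hApos
  have hlpos : 0 < l := div_pos hsA hsb
  have key : ∀ t ∈ Set.Icc a b, Real.sqrt (f t) ≤ l / 2 + f t / (2 * l) := by
    intro t ht
    have h1 : 0 ≤ f t := hnn t ht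
    have h2 : Real.sqrt (f t) ^ 2 = f t := Real.sq_sqrt h1
    have h3 : 0 ≤ Real.sqrt (f t) := Real.sqrt_nonneg _
    have h4 : (Real.sqrt (f t) - l)^2 ≥ 0 := sq_nonneg _
    rw [div_add_div _ _ (two_ne_zero) (by positivity), le_div_iff₀ (by positivity)]
    nlinarith
  have hint1 : IntervalIntegrable (fun t => Real.sqrt (f t)) MeasureTheory.volume a b := by
    apply ContinuousOn.intervalIntegrable
    rw [huIcc]; exact hcont.sqrt
  have hint2 : IntervalIntegrable (fun t => l / 2 + f t / (2 * l)) MeasureTheory.volume a b := by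
    apply IntervalIntegrable.add intervalIntegrable_const
    exact hfi.div_const _
  have hmono := intervalIntegral.integral_mono_on hab.le hint1 hint2 key
  have hval : (∫ t in a..b, (l / 2 + f t / (2 * l))) = (b - a) * (l/2) + A / (2*l) := by
    rw [intervalIntegral.integral_add intervalIntegrable_const (hfi.div_const _),
      intervalIntegral.integral_const, intervalIntegral.integral_div]
    simp [smul_eq_mul, mul_comm, hA]
  have hfinal : (b - a) * (l/2) + A / (2*l) = Real.sqrt ((b-a) * A) := by
    have e1 : Real.sqrt ((b-a)*A) = Real.sqrt (b-a) * Real.sqrt A := Real.sqrt_mul hbapos.le _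
    have e2 : Real.sqrt (b-a) ^ 2 = b - a := Real.sq_sqrt hbapos.le
    have e3 : Real.sqrt A ^ 2 = A := Real.sq_sqrt hApos.le
    rw [e1, hl]
    field_simp
    ring_nf
    nlinarith [hsb, hsA]
  calc (∫ t in a..b, Real.sqrt (f t)) ≤ ∫ t in a..b, (l / 2 + f t / (2 * l)) := hmono
    _ = (b - a) * (l/2) + A / (2*l) := hval
    _ = Real.sqrt ((b-a) * A) := hfinal

-- the per-interval estimate
lemma step_est (P : Set (EuclideanSpace ℝ (Fin n))) (hP : IsOpen P)
    (u : EuclideanSpace ℝ (Fin n) → ℝ) (hsmooth : ContDiffOn ℝ (⊤ : ℕ∞) u P)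
    (M : ℝ) (hM : MCondE P u M)
    (hstrict : ∀ x ∈ P, ∀ v : EuclideanSpace ℝ (Fin n), v ≠ 0 → 0 < Hbil u x v v)
    (p v : EuclideanSpace ℝ (Fin n)) (hv : v ≠ 0)
    (hnear : ∀ s : ℝ, |s| < 1 → p + s • v ∈ P)
    (a b : ℝ) (hab : a < b) (h1 : -1 < 2*a - b) (h2 : 2*b - a < 1) :
    (∫ t in a..b, Real.sqrt (Hbil u (p + t • v) v v)) ≤
      Real.sqrt ((b - a) * (M * ‖v‖)) := by
  have ha1 : -1 < a := by linarith
  have hb1 : b < 1 := by linarith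
  have hsub : Icc a b ⊆ {s : ℝ | |s| < 1} := by
    intro t ht
    simp only [mem_setOf_eq, abs_lt]
    exact ⟨by linarith [ht.1], by linarith [ht.2]⟩
  set γ : ℝ → EuclideanSpace ℝ (Fin n) := fun t => p + t • v with hγ
  have hγcont : Continuous γ := continuous_const.add (continuous_id.smul continuous_const)
  have hγderiv : ∀ t : ℝ, HasDerivAt γ v t := by
    intro t
    simpa [hγ] using ((hasDerivAt_id t).smul_const v).const_add p
  -- infrastructure
  have hD : ContDiffOn ℝ 1 (fun y => fderiv ℝ u y) P := hsmooth.fderiv_of_isOpen hP (by exact WithTop.coe_le_coe.2 (le_top : (1 + 1 : ℕ∞) ≤ ⊤))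
  have hG : ContDiffOn ℝ 1 (fun y => fderiv ℝ u y v) P :=
    (ContinuousLinearMap.apply ℝ ℝ v).contDiff.comp_contDiffOn hD
  have hHcont : ContinuousOn (fun x => Hbil u x v v) P :=
    (hG.continuousOn_fderiv_of_isOpen hP le_rfl).clm_apply continuousOn_const
  have hGderiv : ∀ x ∈ P, HasFDerivAt (fun y => fderiv ℝ u y v)
      (fderiv ℝ (fun y => fderiv ℝ u y v) x) x := fun x hx =>
    ((hG.differentiableOn one_ne_zero).differentiableAt (hP.mem_nhds hx)).hasFDerivAt
  set h : ℝ → ℝ := fun t => Hbil u (γ t) v v with hh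
  have hmaps : MapsTo γ (Icc a b) P := fun t ht => hnear t (hsub ht)
  have hcont_h : ContinuousOn h (Icc a b) := hHcont.comp hγcont.continuousOn hmaps
  have hF : ∀ t ∈ Icc a b, HasDerivAt (fun s => fderiv ℝ u (γ s) v) (h t) t := by
    intro t ht
    exact (hGderiv (γ t) (hmaps ht)).comp_hasDerivAt t (hγderiv t)
  have hint_h : IntervalIntegrable h MeasureTheory.volume a b := by
    apply ContinuousOn.intervalIntegrable; rwa [uIcc_of_le hab.le]
  have hFTC : (∫ t in a..b, h t) = fderiv ℝ u (γ b) v - fderiv ℝ u (γ a) v := by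
    apply intervalIntegral.integral_eq_sub_of_hasDerivAt
    · intro t ht; exact hF t (by rwa [uIcc_of_le hab.le] at ht)
    · exact hint_h
  -- M-condition
  have hR : (0:ℝ) < ‖v‖ := norm_pos_iff.2 hv
  have hMbound : fderiv ℝ u (γ b) v - fderiv ℝ u (γ a) v ≤ M * ‖v‖ := by
    have hne : γ a ≠ γ b := by
      simp only [hγ, ne_eq, add_right_inj]
      intro hcon
      have : (b - a) • v = 0 := by rw [sub_smul, hcon, sub_self]
      rcases smul_eq_zero.1 this with h' | h'
      · exact absurd h' (sub_ne_zero.2 hab.ne')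
      · exact hv h'
    have htrip : ∀ t : ℝ, t ∈ Set.Icc (-(3 : ℝ)/2) (3/2) →
        midpoint ℝ (γ a) (γ b) + t • (γ a - γ b) ∈ P := by
      intro t ht
      have key : midpoint ℝ (γ a) (γ b) + t • (γ a - γ b)
          = p + ((a+b)/2 + t*(a-b)) • v := by
        simp only [hγ, midpoint_eq_smul_add, invOf_eq_inv]
        match_scalars <;> field_simp <;> ring
      rw [key]
      apply hnear
      rw [abs_lt]
      have hta : t * (a - b) ≤ (3/2) * (b - a) := by nlinarith [ht.1, ht.2]
      have htb : -((3/2) * (b - a)) ≤ t * (a - b) := by nlinarith [ht.1, ht.2]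
      constructor <;> nlinarith
    have := hM (γ a) (γ b) (hmaps (left_mem_Icc.2 hab.le)) (hmaps (right_mem_Icc.2 hab.le)) hne htrip
    have hdiff : γ b - γ a = (b - a) • v := by
      simp only [hγ]; module
    have hnorm : ‖γ b - γ a‖ = (b - a) * ‖v‖ := by
      rw [hdiff, norm_smul, Real.norm_eq_abs, abs_of_pos (by linarith)]
    have hν : ‖γ b - γ a‖⁻¹ • (γ b - γ a) = ‖v‖⁻¹ • v := by
      rw [hdiff, norm_smul, Real.norm_eq_abs, abs_of_pos (show (0:ℝ) < b - a by linarith),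
        smul_smul]
      congr 1
      field_simp
      exact div_self (by linarith)
    rw [hν] at this
    have e1 : ∀ x, fderiv ℝ u x (‖v‖⁻¹ • v) = ‖v‖⁻¹ * fderiv ℝ u x v := by
      intro x; rw [ContinuousLinearMap.map_smul, smul_eq_mul]
    rw [e1, e1] at this
    have h' : ‖v‖⁻¹ * (fderiv ℝ u (γ b) v - fderiv ℝ u (γ a) v) ≤ M := by
      rw [mul_sub]; exact this
    have h3 := mul_le_mul_of_nonneg_left h' hR.le
    rw [← mul_assoc, mul_inv_cancel₀ hR.ne', one_mul] at h3
    linarith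
  -- conclude by Cauchy-Schwarz / AM-GM
  have hpos : ∀ t ∈ Ioo a b, 0 < h t := fun t ht =>
    hstrict (γ t) (hmaps ⟨ht.1.le, ht.2.le⟩) v hv
  have hnn : ∀ t ∈ Icc a b, 0 ≤ h t := fun t ht => (hstrict (γ t) (hmaps ht) v hv).le
  calc (∫ t in a..b, Real.sqrt (h t))
      ≤ Real.sqrt ((b - a) * ∫ t in a..b, h t) :=
        sqrt_int_le h a b hab hcont_h hpos hnn
    _ ≤ Real.sqrt ((b - a) * (M * ‖v‖)) := by
        apply Real.sqrt_le_sqrt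
        apply mul_le_mul_of_nonneg_left _ (by linarith : (0:ℝ) ≤ b - a)
        rw [hFTC]; exact hMbound


lemma sqrt_pow' (c : ℝ) (hc : 0 ≤ c) (N : ℕ) : Real.sqrt (c^N) = Real.sqrt c ^ N := by
  induction N with
  | zero => simp
  | succ k ih => rw [pow_succ, pow_succ, Real.sqrt_mul (pow_nonneg hc k), ih]

lemma key_seg (P : Set (EuclideanSpace ℝ (Fin n))) (hP : IsOpen P)
    (u : EuclideanSpace ℝ (Fin n) → ℝ) (hsmooth : ContDiffOn ℝ (⊤ : ℕ∞) u P)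
    (hstrict : ∀ x ∈ P, ∀ v : EuclideanSpace ℝ (Fin n), v ≠ 0 → 0 < Hbil u x v v)
    (M : ℝ) (hM : MCondE P u M)
    (p v : EuclideanSpace ℝ (Fin n)) (hv : v ≠ 0)
    (hnear : ∀ s : ℝ, |s| < 1 → p + s • v ∈ P) :
    glen u (fun t => p + t • v) ≤ (Real.sqrt 2 - 1)⁻¹ * Real.sqrt (M * ‖v‖) := by
  have hs2 : (1:ℝ) < Real.sqrt 2 := by
    have := Real.sq_sqrt (by norm_num : (2:ℝ) ≥ 0)
    nlinarith [Real.sqrt_nonneg 2]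
  have hRHSnn : 0 ≤ (Real.sqrt 2 - 1)⁻¹ * Real.sqrt (M * ‖v‖) :=
    mul_nonneg (inv_nonneg.2 (by linarith)) (Real.sqrt_nonneg _)
  set R : ℝ := ‖v‖ with hRdef
  have hR : 0 < R := norm_pos_iff.2 hv
  set ψ : ℝ → ℝ := fun t => Real.sqrt (Hbil u (p + t • v) v v) with hψ
  have hglen : glen u (fun t => p + t • v) = ∫ t in (0:ℝ)..1, ψ t := by
    unfold glen
    apply intervalIntegral.integral_congr
    intro t _
    have hd : deriv (fun t : ℝ => p + t • v) t = v := by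
      simpa using (((hasDerivAt_id t).smul_const v).const_add p).deriv
    simp [hd, hψ]
  rw [hglen]
  by_cases hint : IntervalIntegrable ψ MeasureTheory.volume 0 1
  · -- main case
    have hcbound : ∀ c ∈ Ioo (1/2 : ℝ) 1,
        (∫ t in (0:ℝ)..1, ψ t) ≤ (1 - Real.sqrt c)⁻¹ * Real.sqrt ((1-c) * (M * R)) := by
      intro c hc
      obtain ⟨hc2, hc1⟩ := hc
      have hc0 : (0:ℝ) < c := by linarith
      have hsc1 : Real.sqrt c < 1 := by
        rw [Real.sqrt_lt' one_pos]; nlinarith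
      have hsc0 : 0 ≤ Real.sqrt c := Real.sqrt_nonneg c
      have hpowlt : ∀ N : ℕ, c ^ N ≤ 1 := fun N => pow_le_one₀ hc0.le hc1.le
      have hpow0 : ∀ N : ℕ, 0 < c ^ N := fun N => pow_pos hc0 N
      -- partial sums
      have hck : ∀ k : ℕ, c^(k+1) = c^k * c := fun k => pow_succ c k
      have hBnn : (0:ℝ) ≤ Real.sqrt ((1-c) * (M * R)) := Real.sqrt_nonneg _
      have claim : ∀ N : ℕ, (∫ t in (0:ℝ)..(1 - c^N), ψ t) ≤
          (∑ k ∈ Finset.range N, Real.sqrt c ^ k) * Real.sqrt ((1-c) * (M * R)) := by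
        intro N
        induction N with
        | zero => simpa using mul_nonneg (by positivity) hBnn
        | succ k ih =>
          have hablt : (1 - c^k) < 1 - c^(k+1) := by nlinarith [hck k, hpow0 k]
          have ha0 : (0:ℝ) ≤ 1 - c^k := by nlinarith [hpowlt k]
          have hb1 : 1 - c^(k+1) ≤ 1 := by nlinarith [hpow0 (k+1)]
          have hik1 : IntervalIntegrable ψ MeasureTheory.volume 0 (1 - c^k) := by
            apply hint.mono_set
            rw [uIcc_of_le ha0, uIcc_of_le (by norm_num : (0:ℝ) ≤ 1)]
            exact Icc_subset_Icc le_rfl (by nlinarith [hpow0 k])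
          have hik2 : IntervalIntegrable ψ MeasureTheory.volume (1 - c^k) (1 - c^(k+1)) := by
            apply hint.mono_set
            rw [uIcc_of_le hablt.le, uIcc_of_le (by norm_num : (0:ℝ) ≤ 1)]
            exact Icc_subset_Icc ha0 hb1
          have hsplit := intervalIntegral.integral_add_adjacent_intervals hik1 hik2
          have hpiece := step_est P hP u hsmooth M hM hstrict p v hv hnear
            (1 - c^k) (1 - c^(k+1)) hablt
            (by nlinarith [hck k, hpowlt k, hpow0 k])
            (by nlinarith [hck k, hpow0 k])
          have hba : (1 - c^(k+1)) - (1 - c^k) = c^k * (1-c) := by rw [hck k]; ring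
          have hre : ((1 - c^(k+1)) - (1 - c^k)) * (M * R) = c^k * ((1-c) * (M * R)) := by
            rw [hba]; ring
          rw [hre, Real.sqrt_mul (pow_nonneg hc0.le k), sqrt_pow' c hc0.le k] at hpiece
          rw [Finset.sum_range_succ, add_mul, ← hsplit]
          have : (∫ t in (1 - c^k)..(1 - c^(k+1)), ψ t) ≤ Real.sqrt c ^ k * Real.sqrt ((1-c)*(M*R)) := by
            simpa [hψ] using hpiece
          linarith
      have hsum : ∀ N : ℕ, (∑ k ∈ Finset.range N, Real.sqrt c ^ k) ≤ (1 - Real.sqrt c)⁻¹ := by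
        intro N
        have h0 : (0:ℝ) < 1 - Real.sqrt c := by linarith
        rw [geom_sum_eq (ne_of_lt hsc1) N]
        have he : (Real.sqrt c ^ N - 1)/(Real.sqrt c - 1) = (1 - Real.sqrt c ^ N)/(1 - Real.sqrt c) := by
          rw [div_eq_div_iff (by linarith) (by linarith)]; ring
        rw [he, div_le_iff₀ h0, inv_mul_cancel₀ (ne_of_gt h0)]
        nlinarith [pow_nonneg hsc0 N]
      have claim2 : ∀ N : ℕ, (∫ t in (0:ℝ)..(1 - c^N), ψ t) ≤
          (1 - Real.sqrt c)⁻¹ * Real.sqrt ((1-c) * (M * R)) := fun N =>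
        (claim N).trans (mul_le_mul_of_nonneg_right (hsum N) hBnn)
      -- limit N → ∞
      have hΦ : ContinuousOn (fun x => ∫ t in (0:ℝ)..x, ψ t) (Icc 0 1) := by
        have h1 : MeasureTheory.IntegrableOn ψ (uIcc (0:ℝ) 1) MeasureTheory.volume := by
          rw [uIcc_of_le (by norm_num : (0:ℝ) ≤ 1), integrableOn_Icc_iff_integrableOn_Ioc]
          exact hint.1
        simpa [uIcc_of_le (by norm_num : (0:ℝ) ≤ 1)] using
          intervalIntegral.continuousOn_primitive_interval h1
      have hseq : Filter.Tendsto (fun N : ℕ => 1 - c^N) Filter.atTop (nhds (1:ℝ)) := by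
        have h := tendsto_pow_atTop_nhds_zero_of_lt_one hc0.le hc1
        simpa using (tendsto_const_nhds (x := (1:ℝ)) (f := Filter.atTop)).sub h
      have hmem : ∀ N : ℕ, (1 - c^N) ∈ Icc (0:ℝ) 1 :=
        fun N => ⟨by nlinarith [hpowlt N], by nlinarith [hpow0 N]⟩
      have htend : Filter.Tendsto (fun N : ℕ => ∫ t in (0:ℝ)..(1 - c^N), ψ t)
          Filter.atTop (nhds (∫ t in (0:ℝ)..1, ψ t)) := by
        have hcw := (hΦ 1 (right_mem_Icc.2 zero_le_one)).tendsto
        exact hcw.comp (tendsto_nhdsWithin_of_tendsto_nhds_of_eventually_within _ hseq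
          (Filter.Eventually.of_forall hmem))
      exact le_of_tendsto htend (Filter.Eventually.of_forall claim2)
    -- outer limit c → 1/2⁺
    set L : ℝ := (1 - Real.sqrt (1/2))⁻¹ * Real.sqrt ((1 - 1/2) * (M * R)) with hLdef
    have hhalf : Real.sqrt (1/2) < 1 := by
      rw [Real.sqrt_lt' one_pos]; norm_num
    have hLt : Filter.Tendsto (fun c : ℝ => (1 - Real.sqrt c)⁻¹ * Real.sqrt ((1-c)*(M*R)))
        (nhdsWithin (1/2 : ℝ) (Ioi (1/2:ℝ))) (nhds L) := by
      have hca : ContinuousAt (fun c : ℝ => (1 - Real.sqrt c)⁻¹ * Real.sqrt ((1-c)*(M*R))) (1/2) := by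
        apply ContinuousAt.mul
        · exact ((continuous_const.sub Real.continuous_sqrt).continuousAt).inv₀ (by show (1:ℝ) - Real.sqrt (1/2) ≠ 0; linarith)
        · exact Real.continuous_sqrt.continuousAt.comp (by fun_prop)
      exact hca.tendsto.mono_left nhdsWithin_le_nhds
    have hIle : (∫ t in (0:ℝ)..1, ψ t) ≤ L := by
      refine ge_of_tendsto hLt ?_
      filter_upwards [Ioo_mem_nhdsGT_of_mem (Set.left_mem_Ico.2 (by norm_num : (1/2:ℝ) < 1))]
        with c hc using hcbound c hc
    have hLeq : L = (Real.sqrt 2 - 1)⁻¹ * Real.sqrt (M * R) := by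
      have h2 : ((1:ℝ) - 1/2) = 2⁻¹ := by norm_num
      have h3 : ((1:ℝ)/2) = 2⁻¹ := by norm_num
      rw [hLdef, h2, h3, Real.sqrt_inv, Real.sqrt_mul (by norm_num : (0:ℝ) ≤ 2⁻¹), Real.sqrt_inv]
      have hs0 : Real.sqrt 2 ≠ 0 := by linarith
      have hs1 : Real.sqrt 2 - 1 ≠ 0 := by linarith
      have hsinv : (1:ℝ) - (Real.sqrt 2)⁻¹ ≠ 0 := by
        have : (Real.sqrt 2)⁻¹ < 1 := by
          rw [inv_lt_one_iff₀]; right; exact hs2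
        linarith
      have hsq : Real.sqrt 2 * Real.sqrt 2 = 2 := Real.mul_self_sqrt (by norm_num)
      field_simp
    rw [← hLeq]; exact hIle
  · rw [intervalIntegral.integral_undef hint]
    exact hRHSnn


end

noncomputable section

/-- if `u` satisfies the `M`-condition on `P`, then the distance
from `p ∈ P` to `∂P` in the Hessian metric `g = Hess u` is at most
`(√2−1)⁻¹ √(M · Dist_Euc(p, ∂P))`. -/
theorem stmt2 (n : ℕ) (P : Set (EuclideanSpace ℝ (Fin n)))
    (hP : IsOpen P) (hPc : Convex ℝ P) (hPb : Bornology.IsBounded P)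
    (hPne : P.Nonempty)
    (u : EuclideanSpace ℝ (Fin n) → ℝ)
    (hsmooth : ContDiffOn ℝ (⊤ : ℕ∞) u P) (hconv : ConvexOn ℝ P u)
    (hstrict : ∀ x ∈ P, ∀ v : EuclideanSpace ℝ (Fin n), v ≠ 0 → 0 < Hbil u x v v)
    (M : ℝ) (hM : MCondE P u M)
    (p : EuclideanSpace ℝ (Fin n)) (hp : p ∈ P) :
    sInf {d : ℝ | ∃ q ∈ frontier P, d = gdist u (closure P) p q} ≤
      (Real.sqrt 2 - 1)⁻¹ * Real.sqrt (M * Metric.infDist p (frontier P)) := by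
  have hs2 : (1:ℝ) < Real.sqrt 2 := by
    have := Real.sq_sqrt (by norm_num : (2:ℝ) ≥ 0)
    nlinarith [Real.sqrt_nonneg 2]
  have hRHSnn : 0 ≤ (Real.sqrt 2 - 1)⁻¹ * Real.sqrt (M * Metric.infDist p (frontier P)) :=
    mul_nonneg (inv_nonneg.2 (by linarith)) (Real.sqrt_nonneg _)
  by_cases hfr : (frontier P).Nonempty
  · -- choose nearest boundary point
    have hcomp : IsCompact (frontier P) :=
      Metric.isCompact_of_isClosed_isBounded isClosed_frontier
        (hPb.closure.subset frontier_subset_closure)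
    obtain ⟨q, hq, hqd⟩ := hcomp.exists_infDist_eq_dist hfr p
    set R : ℝ := dist p q with hRdef
    have hqP : q ∉ P := by
      rw [hP.frontier_eq] at hq; exact hq.2
    have hqne : q ≠ p := fun h => hqP (h ▸ hp)
    have hR : 0 < R := dist_pos.2 (Ne.symm hqne)
    have hPuniv : P ≠ univ := by
      intro h
      rw [h] at hfr; simp [frontier_univ] at hfr
    have hball : Metric.ball p R ⊆ P := by
      obtain ⟨y, hy, hyd⟩ := exists_mem_frontier_infDist_compl_eq_dist hp hPuniv
      have h1 : R ≤ Metric.infDist p Pᶜ := by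
        rw [hyd, ← hqd]; exact Metric.infDist_le_dist_of_mem hy
      exact (Metric.ball_subset_ball h1).trans Metric.ball_infDist_compl_subset
    set v : EuclideanSpace ℝ (Fin n) := q - p with hvdef
    have hv : v ≠ 0 := sub_ne_zero.2 hqne
    have hnv : ‖v‖ = R := by rw [hvdef, hRdef, dist_eq_norm, norm_sub_rev]
    have hnear : ∀ s : ℝ, |s| < 1 → p + s • v ∈ P := by
      intro s hs
      apply hball
      rw [Metric.mem_ball, dist_eq_norm, add_sub_cancel_left, norm_smul, Real.norm_eq_abs, hnv]
      calc |s| * R < 1 * R := by apply mul_lt_mul_of_pos_right hs hR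
        _ = R := one_mul R
    set γ : ℝ → EuclideanSpace ℝ (Fin n) := fun t => p + t • v with hγdef
    have hγP : ∀ t ∈ Set.Icc (0:ℝ) 1, γ t ∈ closure P := by
      intro t ht
      rcases eq_or_lt_of_le ht.2 with h1 | h1
      · have : γ t = q := by rw [hγdef, h1]; simp [hvdef]
        rw [this]; exact frontier_subset_closure hq
      · exact subset_closure (hnear t (abs_lt.2 ⟨by linarith [ht.1], h1⟩))
    have hγsmooth : ContDiffOn ℝ 1 γ (Set.Icc 0 1) :=
      (contDiff_const.add (contDiff_id.smul contDiff_const)).contDiffOn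
    have hglen_nonneg : ∀ γ' : ℝ → EuclideanSpace ℝ (Fin n), 0 ≤ glen u γ' := fun γ' =>
      intervalIntegral.integral_nonneg (by norm_num) (fun _ _ => Real.sqrt_nonneg _)
    have hgd_nonneg : ∀ q' : EuclideanSpace ℝ (Fin n), 0 ≤ gdist u (closure P) p q' := by
      intro q'
      apply Real.sInf_nonneg
      rintro L ⟨γ', _, _, _, _, rfl⟩
      exact hglen_nonneg γ'
    have hgd_le : gdist u (closure P) p q ≤ glen u γ := by
      unfold gdist
      apply csInf_le ⟨0, ?_⟩ ?_
      · rintro L ⟨γ', _, _, _, _, rfl⟩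
        exact hglen_nonneg γ'
      · exact ⟨γ, hγsmooth, by simp [hγdef], by simp [hγdef, hvdef], hγP, rfl⟩
    have hkey := key_seg P hP u hsmooth hstrict M hM p v hv hnear
    have houter : sInf {d : ℝ | ∃ q' ∈ frontier P, d = gdist u (closure P) p q'} ≤
        gdist u (closure P) p q := by
      have hm : gdist u (closure P) p q ∈
          {d : ℝ | ∃ q' ∈ frontier P, d = gdist u (closure P) p q'} := ⟨q, hq, rfl⟩
      apply csInf_le ⟨0, ?_⟩ hm
      rintro d ⟨q', _, rfl⟩
      exact hgd_nonneg q'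
    have hfin : Metric.infDist p (frontier P) = ‖v‖ := by rw [hnv, hRdef, hqd]
    rw [hfin]
    exact houter.trans (hgd_le.trans hkey)
  · have : {d : ℝ | ∃ q ∈ frontier P, d = gdist u (closure P) p q} = ∅ := by
      rw [Set.not_nonempty_iff_eq_empty] at hfr
      simp [hfr]
    rw [this, Real.sInf_empty]
    exact hRHSnn


end
end

section
/- Let u be a smooth strictly convex function on an open set in ℝⁿ, and let v(x) = u(p + (x−p)Aᵀ) for an invertible matrix A. Then the curvature norm |F|² = u^{ij}_{,kl} u^{kl}_{,ij} (where (u^{ij}) is the inverse Hessian and subscripts after the comma denote partial derivatives) is invariant: at the point p, v^{αβ}_{,γδ} v^{γδ}_{,αβ} = u^{ij}_{,kl} u^{kl}_{,ij}. -/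
open Matrix
open scoped BigOperators

noncomputable section

/-- Partial derivative of `f` in the `i`-th coordinate direction. -/
def pd {n : ℕ} (f : (Fin n → ℝ) → ℝ) (i : Fin n) : (Fin n → ℝ) → ℝ :=
  fun x => fderiv ℝ f x (Pi.single i 1)

/-- Second partial derivative `∂²f/∂x_k∂x_l`. -/
def D2 {n : ℕ} (f : (Fin n → ℝ) → ℝ) (k l : Fin n) : (Fin n → ℝ) → ℝ :=
  pd (pd f k) l

/-- The Hessian matrix `(u_{ij})` of `u` at `x`. -/
def hessM {n : ℕ} (u : (Fin n → ℝ) → ℝ) (x : Fin n → ℝ) : Matrix (Fin n) (Fin n) ℝ :=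
  Matrix.of fun i j => D2 u i j x

/-- The inverse Hessian matrix `(u^{ij})` of `u` at `x`. -/
def invH {n : ℕ} (u : (Fin n → ℝ) → ℝ) (x : Fin n → ℝ) : Matrix (Fin n) (Fin n) ℝ :=
  (hessM u x)⁻¹

/-- `|F|² = u^{ij}_{,kl} u^{kl}_{,ij}` (curvature norm squared). -/
def Fsq {n : ℕ} (u : (Fin n → ℝ) → ℝ) (x : Fin n → ℝ) : ℝ :=
  ∑ i, ∑ j, ∑ k, ∑ l,
    D2 (fun y => invH u y i j) k l x * D2 (fun y => invH u y k l) i j x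

/-- The scalar curvature `A = −∑ (u^{ij})_{,ij}` (Abreu's formula). -/
def scalA {n : ℕ} (u : (Fin n → ℝ) → ℝ) (x : Fin n → ℝ) : ℝ :=
  -∑ i, ∑ j, D2 (fun y => invH u y i j) i j x

end

noncomputable section

namespace Stmt4Aux

open Kronecker

variable {n : ℕ}

lemma pd_congr_nhds {f g : (Fin n → ℝ) → ℝ} {W : Set (Fin n → ℝ)} (hW : IsOpen W)
    {y : Fin n → ℝ} (hy : y ∈ W) (h : ∀ z ∈ W, f z = g z) (i : Fin n) :
    pd f i y = pd g i y := by
  have hfg : f =ᶠ[nhds y] g := Filter.eventually_of_mem (hW.mem_nhds hy) h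
  unfold pd; rw [hfg.fderiv_eq]

lemma pd_smooth {f : (Fin n → ℝ) → ℝ} {s : Set (Fin n → ℝ)} (hs : IsOpen s)
    (hf : ContDiffOn ℝ (⊤:ℕ∞) f s) (i : Fin n) : ContDiffOn ℝ (⊤:ℕ∞) (pd f i) s := by
  have h := hf.fderiv_of_isOpen (m := (⊤:ℕ∞)) hs (by norm_cast)
  exact h.clm_apply contDiffOn_const

lemma diffAt {f : (Fin n → ℝ) → ℝ} {s : Set (Fin n → ℝ)} {x : Fin n → ℝ} (hs : IsOpen s)
    (hf : ContDiffOn ℝ (⊤:ℕ∞) f s) (hx : x ∈ s) : DifferentiableAt ℝ f x :=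
  (hf.contDiffAt (hs.mem_nhds hx)).differentiableAt (by simp)

lemma pd_sum {ι : Type*} (t : Finset ι) (f : ι → (Fin n → ℝ) → ℝ) (x : Fin n → ℝ)
    (hf : ∀ i ∈ t, DifferentiableAt ℝ (f i) x) (k : Fin n) :
    pd (fun z => ∑ i ∈ t, f i z) k x = ∑ i ∈ t, pd (f i) k x := by
  unfold pd; rw [fderiv_fun_sum hf]; simp

lemma pd_const_mul (c : ℝ) {f : (Fin n → ℝ) → ℝ} {x : Fin n → ℝ}
    (hf : DifferentiableAt ℝ f x) (k : Fin n) :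
    pd (fun z => c * f z) k x = c * pd f k x := by
  unfold pd; rw [fderiv_const_mul hf]; simp

lemma hasFDerivAt_affine (A : Matrix (Fin n) (Fin n) ℝ) (p x : Fin n → ℝ) :
    HasFDerivAt (fun z => p + A.mulVec (z - p))
      (LinearMap.toContinuousLinearMap A.mulVecLin) x := by
  have h1 : (fun z => p + A.mulVec (z - p))
      = fun z => (LinearMap.toContinuousLinearMap A.mulVecLin) z + (p - A.mulVec p) := by
    ext y j
    simp [Matrix.mulVec_sub, Matrix.sub_apply]
    ring
  rw [h1]
  exact (LinearMap.toContinuousLinearMap A.mulVecLin).hasFDerivAt.add_const _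

lemma diffAt_affine (A : Matrix (Fin n) (Fin n) ℝ) (p x : Fin n → ℝ) :
    DifferentiableAt ℝ (fun z => p + A.mulVec (z - p)) x :=
  (hasFDerivAt_affine A p x).differentiableAt

lemma pd_comp (A : Matrix (Fin n) (Fin n) ℝ) (p : Fin n → ℝ)
    {f : (Fin n → ℝ) → ℝ} {x : Fin n → ℝ}
    (hf : DifferentiableAt ℝ f (p + A.mulVec (x - p))) (i : Fin n) :
    pd (fun z => f (p + A.mulVec (z - p))) i x
      = ∑ a, A a i * pd f a (p + A.mulVec (x - p)) := by
  set L := LinearMap.toContinuousLinearMap A.mulVecLin with hL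
  set φ := fun z => p + A.mulVec (z - p) with hφ
  have hc : HasFDerivAt (fun z => f (φ z)) ((fderiv ℝ f (φ x)).comp L) x :=
    (hf.hasFDerivAt.comp x (hasFDerivAt_affine A p x))
  have h0 : pd (fun z => f (φ z)) i x = (fderiv ℝ f (φ x)) (L (Pi.single i 1)) := by
    unfold pd; rw [hc.fderiv]; rfl
  rw [h0]
  have hLs : L (Pi.single i 1) = A.mulVec (Pi.single i 1) := rfl
  rw [hLs]
  have expand : ∀ (ℓ : (Fin n → ℝ) →L[ℝ] ℝ) (w : Fin n → ℝ),
      ℓ w = ∑ a, w a * ℓ (Pi.single a 1) := by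
    intro ℓ w
    have hw : w = ∑ a, w a • (Pi.single a 1 : Fin n → ℝ) := by
      ext j; simp [Pi.single_apply, Finset.sum_apply]
    conv_lhs => rw [hw]
    rw [map_sum]; simp [_root_.map_smul]
  rw [expand]
  refine Finset.sum_congr rfl fun a _ => ?_
  simp [Matrix.mulVec_single, pd, hφ]

lemma det_smooth {s : Set (Fin n → ℝ)} (M : (Fin n → ℝ) → Matrix (Fin n) (Fin n) ℝ)
    (h : ∀ i j, ContDiffOn ℝ (⊤:ℕ∞) (fun y => M y i j) s) :
    ContDiffOn ℝ (⊤:ℕ∞) (fun y => (M y).det) s := by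
  simp only [Matrix.det_apply, Units.smul_def, zsmul_eq_mul]
  exact ContDiffOn.sum fun σ _ =>
    contDiffOn_const.mul (contDiffOn_prod fun i _ => h (σ i) i)

lemma adjugate_smooth {s : Set (Fin n → ℝ)} (M : (Fin n → ℝ) → Matrix (Fin n) (Fin n) ℝ)
    (h : ∀ i j, ContDiffOn ℝ (⊤:ℕ∞) (fun y => M y i j) s) (a b : Fin n) :
    ContDiffOn ℝ (⊤:ℕ∞) (fun y => (M y).adjugate a b) s := by
  simp only [Matrix.adjugate_apply]
  apply det_smooth
  intro i j
  by_cases hib : i = b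
  · subst hib; simp only [Matrix.updateRow_self]; exact contDiffOn_const
  · simp only [Matrix.updateRow_ne hib]; exact h i j

lemma sum_swap4 (f : Fin n → Fin n → Fin n → Fin n → ℝ) :
    ∑ c, ∑ d, ∑ a, ∑ b, f a b c d = ∑ a, ∑ b, ∑ c, ∑ d, f a b c d :=
  calc ∑ c, ∑ d, ∑ a, ∑ b, f a b c d
      = ∑ c, ∑ a, ∑ d, ∑ b, f a b c d :=
        Finset.sum_congr rfl fun _ _ => Finset.sum_comm
    _ = ∑ a, ∑ c, ∑ d, ∑ b, f a b c d := Finset.sum_comm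
    _ = ∑ a, ∑ c, ∑ b, ∑ d, f a b c d :=
        Finset.sum_congr rfl fun _ _ => Finset.sum_congr rfl fun _ _ => Finset.sum_comm
    _ = ∑ a, ∑ b, ∑ c, ∑ d, f a b c d :=
        Finset.sum_congr rfl fun _ _ => Finset.sum_comm

lemma entry_formula (A B : Matrix (Fin n) (Fin n) ℝ)
    (M : Matrix (Fin n × Fin n) (Fin n × Fin n) ℝ) (i j k l : Fin n) :
    ((B ⊗ₖ B) * M * (A ⊗ₖ A)) (i,j) (k,l)
      = ∑ a, ∑ b, B i a * B j b * ∑ c, A c k * ∑ d, A d l * M (a,b) (c,d) := by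
  simp only [Matrix.mul_apply, Fintype.sum_prod_type, Matrix.kroneckerMap_apply,
    Finset.sum_mul, Finset.mul_sum]
  rw [sum_swap4 (f := fun a b c d => B i a * B j b * M (a,b) (c,d) * (A c k * A d l))]
  refine Finset.sum_congr rfl fun a _ => Finset.sum_congr rfl fun b _ =>
    Finset.sum_congr rfl fun c _ => Finset.sum_congr rfl fun d _ => by ring

lemma trace_conj {A B : Matrix (Fin n) (Fin n) ℝ} (hA : IsUnit A.det) (hB : B = A⁻¹)
    (M : Matrix (Fin n × Fin n) (Fin n × Fin n) ℝ) :
    (((B ⊗ₖ B) * M * (A ⊗ₖ A)) * ((B ⊗ₖ B) * M * (A ⊗ₖ A))).trace = (M * M).trace := by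
  set P := B ⊗ₖ B
  set Q := A ⊗ₖ A
  have hQP : Q * P = 1 := by
    show (A ⊗ₖ A) * (B ⊗ₖ B) = 1
    rw [← Matrix.mul_kronecker_mul, hB, Matrix.mul_nonsing_inv A hA, Matrix.one_kronecker_one]
  have h1 : ∀ X : Matrix (Fin n × Fin n) (Fin n × Fin n) ℝ, Q * (P * X) = X := fun X => by
    rw [← Matrix.mul_assoc, hQP, Matrix.one_mul]
  calc ((P * M * Q) * (P * M * Q)).trace
      = (P * (M * (Q * (P * (M * Q))))).trace := by simp only [Matrix.mul_assoc]
    _ = ((M * (M * Q)) * P).trace := by rw [h1]; exact Matrix.trace_mul_comm _ _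
    _ = (M * M).trace := by
        simp only [Matrix.mul_assoc]; rw [hQP, Matrix.mul_one]


lemma D2_congr_on {f g : (Fin n → ℝ) → ℝ} {W : Set (Fin n → ℝ)} (hW : IsOpen W)
    {y : Fin n → ℝ} (hy : y ∈ W) (h : ∀ z ∈ W, f z = g z) (k l : Fin n) :
    D2 f k l y = D2 g k l y := by
  show pd (pd f k) l y = pd (pd g k) l y
  exact pd_congr_nhds hW hy (fun z hz => pd_congr_nhds hW hz h k) l

lemma D2_comp_on (A : Matrix (Fin n) (Fin n) ℝ) (p : Fin n → ℝ)
    {s W : Set (Fin n → ℝ)} (hs : IsOpen s) (hW : IsOpen W)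
    (hWs : ∀ z ∈ W, (p + A.mulVec (z - p)) ∈ s)
    {f : (Fin n → ℝ) → ℝ} (hf : ContDiffOn ℝ (⊤:ℕ∞) f s)
    {y : Fin n → ℝ} (hy : y ∈ W) (k l : Fin n) :
    D2 (fun z => f (p + A.mulVec (z - p))) k l y
      = ∑ c, A c k * ∑ d, A d l * D2 f c d (p + A.mulVec (y - p)) := by
  have h1 : ∀ z ∈ W, pd (fun w => f (p + A.mulVec (w - p))) k z
      = ∑ c, A c k * pd f c (p + A.mulVec (z - p)) := fun z hz =>
    pd_comp A p (diffAt hs hf (hWs z hz)) k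
  show pd (pd (fun z => f (p + A.mulVec (z - p))) k) l y = _
  rw [pd_congr_nhds hW hy h1 l]
  have hdc : ∀ c : Fin n, DifferentiableAt ℝ (fun z => pd f c (p + A.mulVec (z - p))) y :=
    fun c => (diffAt hs (pd_smooth hs hf c) (hWs y hy)).comp (g := pd f c) y (diffAt_affine A p y)
  rw [pd_sum Finset.univ (fun c z => A c k * pd f c (p + A.mulVec (z - p))) y
    (fun c _ => (hdc c).const_mul _) l]
  refine Finset.sum_congr rfl fun c _ => ?_
  rw [pd_const_mul _ (hdc c) l, pd_comp A p (diffAt hs (pd_smooth hs hf c) (hWs y hy)) l]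
  rfl

lemma D2_sum_const_mul {s : Set (Fin n → ℝ)} (hs : IsOpen s)
    (c : Fin n → Fin n → ℝ) (f : Fin n → Fin n → (Fin n → ℝ) → ℝ)
    (hf : ∀ a b, ContDiffOn ℝ (⊤:ℕ∞) (f a b) s) {x : Fin n → ℝ} (hx : x ∈ s) (k l : Fin n) :
    D2 (fun w => ∑ a, ∑ b, c a b * f a b w) k l x
      = ∑ a, ∑ b, c a b * D2 (f a b) k l x := by
  have h1 : ∀ z ∈ s, pd (fun w => ∑ a, ∑ b, c a b * f a b w) k z
      = ∑ a, ∑ b, c a b * pd (f a b) k z := by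
    intro z hz
    rw [pd_sum Finset.univ (fun a w => ∑ b, c a b * f a b w) z
      (fun a _ => DifferentiableAt.fun_sum fun b _ => (diffAt hs (hf a b) hz).const_mul _) k]
    exact Finset.sum_congr rfl fun a _ => by
      rw [pd_sum Finset.univ (fun b w => c a b * f a b w) z
        (fun b _ => (diffAt hs (hf a b) hz).const_mul _) k]
      exact Finset.sum_congr rfl fun b _ => pd_const_mul _ (diffAt hs (hf a b) hz) k
  show pd (pd (fun w => ∑ a, ∑ b, c a b * f a b w) k) l x = _
  rw [pd_congr_nhds hs hx h1 l]
  have hdc : ∀ a b : Fin n, DifferentiableAt ℝ (fun z => pd (f a b) k z) x :=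
    fun a b => diffAt hs (pd_smooth hs (hf a b) k) hx
  rw [pd_sum Finset.univ (fun a z => ∑ b, c a b * pd (f a b) k z) x
    (fun a _ => DifferentiableAt.fun_sum fun b _ => (hdc a b).const_mul _) l]
  refine Finset.sum_congr rfl fun a _ => ?_
  rw [pd_sum Finset.univ (fun b z => c a b * pd (f a b) k z) x
    (fun b _ => (hdc a b).const_mul _) l]
  exact Finset.sum_congr rfl fun b _ => pd_const_mul _ (hdc a b) l

lemma conj_entriesT (A H : Matrix (Fin n) (Fin n) ℝ) (i j : Fin n) :
    (Aᵀ * H * A) i j = ∑ a, A a i * ∑ b, A b j * H a b := by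
  simp only [Matrix.mul_apply, Matrix.transpose_apply, Finset.sum_mul, Finset.mul_sum]
  rw [Finset.sum_comm]
  exact Finset.sum_congr rfl fun a _ => Finset.sum_congr rfl fun b _ => by ring

lemma conj_entriesB (B G : Matrix (Fin n) (Fin n) ℝ) (i j : Fin n) :
    (B * G * Bᵀ) i j = ∑ a, ∑ b, B i a * B j b * G a b := by
  simp only [Matrix.mul_apply, Matrix.transpose_apply, Finset.sum_mul, Finset.mul_sum]
  rw [Finset.sum_comm]
  exact Finset.sum_congr rfl fun a _ => Finset.sum_congr rfl fun b _ => by ring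

lemma exchange4 (X Y : Fin n → ℝ) (Z : Fin n → Fin n → ℝ) (T : Fin n → Fin n → Fin n → Fin n → ℝ) :
    ∑ c, X c * ∑ d, Y d * (∑ a, ∑ b, Z a b * T a b c d)
      = ∑ a, ∑ b, Z a b * ∑ c, X c * ∑ d, Y d * T a b c d := by
  simp only [Finset.mul_sum]
  rw [sum_swap4 (f := fun a b c d => X c * (Y d * (Z a b * T a b c d)))]
  exact Finset.sum_congr rfl fun a _ => Finset.sum_congr rfl fun b _ =>
    Finset.sum_congr rfl fun c _ => Finset.sum_congr rfl fun d _ => by ring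

lemma Fsq_eq_trace (u : (Fin n → ℝ) → ℝ) (x : Fin n → ℝ) :
    Fsq u x = ((Matrix.of fun (ab : Fin n × Fin n) (cd : Fin n × Fin n) =>
        D2 (fun y => invH u y ab.1 ab.2) cd.1 cd.2 x) *
      (Matrix.of fun (ab : Fin n × Fin n) (cd : Fin n × Fin n) =>
        D2 (fun y => invH u y ab.1 ab.2) cd.1 cd.2 x)).trace := by
  simp [Fsq, Matrix.trace, Matrix.mul_apply, Fintype.sum_prod_type, Matrix.diag]

end Stmt4Aux

/-- invariance of `|F|² = u^{ij}_{,kl} u^{kl}_{,ij}` under the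
affine change of coordinates `v(x) = u(p + (x−p)Aᵀ)` with `A` invertible. -/
theorem stmt4 (n : ℕ) (s : Set (Fin n → ℝ)) (hs : IsOpen s)
    (u : (Fin n → ℝ) → ℝ) (p : Fin n → ℝ) (hp : p ∈ s)
    (hsmooth : ContDiffOn ℝ (⊤ : ℕ∞) u s)
    (hconv : ∀ x ∈ s, (hessM u x).PosDef)
    (A : Matrix (Fin n) (Fin n) ℝ) (hA : IsUnit A.det)
    (v : (Fin n → ℝ) → ℝ)
    (hv : v = fun x => u (p + A.mulVec (x - p))) :
    Fsq v p = Fsq u p := by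
  classical
  have hu : ContDiffOn ℝ (⊤:ℕ∞) u s := hsmooth.of_le (by simp)
  have hφc : Continuous fun z : Fin n → ℝ => p + A.mulVec (z - p) :=
    continuous_const.add ((LinearMap.toContinuousLinearMap A.mulVecLin).continuous.comp
      (continuous_id.sub continuous_const))
  have hWopen : IsOpen (s ∩ (fun z => p + A.mulVec (z - p)) ⁻¹' s) :=
    hs.inter (hs.preimage hφc)
  have hφp : p + A.mulVec (p - p) = p := by simp
  have hpW : p ∈ s ∩ (fun z => p + A.mulVec (z - p)) ⁻¹' s :=
    ⟨hp, by simp only [Set.mem_preimage, hφp]; exact hp⟩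
  have hWs : ∀ z ∈ s ∩ (fun z => p + A.mulVec (z - p)) ⁻¹' s,
      p + A.mulVec (z - p) ∈ s := fun z hz => hz.2
  -- smoothness of entries of hessM u and of invH u
  have hD2u : ∀ i j, ContDiffOn ℝ (⊤:ℕ∞) (fun y => hessM u y i j) s := fun i j =>
    Stmt4Aux.pd_smooth hs (Stmt4Aux.pd_smooth hs hu i) j
  have hdetne : ∀ y ∈ s, (hessM u y).det ≠ 0 := fun y hy => ((hconv y hy).det_pos).ne'
  have hgsm : ∀ a b, ContDiffOn ℝ (⊤:ℕ∞) (fun y => invH u y a b) s := by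
    intro a b
    have h1 : ∀ y, invH u y a b = ((hessM u y).det)⁻¹ * (hessM u y).adjugate a b := by
      intro y
      show (hessM u y)⁻¹ a b = _
      rw [Matrix.inv_def]
      simp [Ring.inverse_eq_inv']
    simp only [h1]
    exact ((Stmt4Aux.det_smooth _ hD2u).inv hdetne).mul (Stmt4Aux.adjugate_smooth _ hD2u a b)
  -- smoothness of the transformed inverse-Hessian entry functions
  have hGsm : ∀ i j, ContDiffOn ℝ (⊤:ℕ∞)
      (fun w => ∑ a, ∑ b, A⁻¹ i a * A⁻¹ j b * invH u w a b) s := fun i j =>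
    ContDiffOn.sum fun a _ => ContDiffOn.sum fun b _ => contDiffOn_const.mul (hgsm a b)
  -- Hessian transformation law on W
  have hhess : ∀ y ∈ s ∩ (fun z => p + A.mulVec (z - p)) ⁻¹' s,
      hessM v y = Aᵀ * hessM u (p + A.mulVec (y - p)) * A := by
    intro y hy
    ext i j
    have h1 : hessM v y i j = D2 (fun z => u (p + A.mulVec (z - p))) i j y := by
      show D2 v i j y = _
      rw [hv]
    rw [h1, Stmt4Aux.D2_comp_on A p hs hWopen hWs hu hy i j,
      Stmt4Aux.conj_entriesT A (hessM u (p + A.mulVec (y - p))) i j]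
    rfl
  -- inverse Hessian transformation law on W
  have hinvv : ∀ y ∈ s ∩ (fun z => p + A.mulVec (z - p)) ⁻¹' s, ∀ i j,
      invH v y i j = (fun w => ∑ a, ∑ b, A⁻¹ i a * A⁻¹ j b * invH u w a b)
        (p + A.mulVec (y - p)) := by
    intro y hy i j
    have h2 : invH v y = A⁻¹ * invH u (p + A.mulVec (y - p)) * (A⁻¹)ᵀ := by
      show (hessM v y)⁻¹ = _
      rw [hhess y hy, Matrix.mul_inv_rev, Matrix.mul_inv_rev,
        ← Matrix.transpose_nonsing_inv, ← Matrix.mul_assoc]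
      rfl
    rw [h2]
    exact Stmt4Aux.conj_entriesB A⁻¹ (invH u (p + A.mulVec (y - p))) i j
  -- key formula for the second derivatives of invH v at p
  have key : ∀ i j k l : Fin n, D2 (fun y => invH v y i j) k l p
      = ∑ a, ∑ b, A⁻¹ i a * A⁻¹ j b *
          ∑ c, A c k * ∑ d, A d l * D2 (fun y => invH u y a b) c d p := by
    intro i j k l
    have e1 : D2 (fun y => invH v y i j) k l p
        = D2 (fun z => (fun w => ∑ a, ∑ b, A⁻¹ i a * A⁻¹ j b * invH u w a b)
            (p + A.mulVec (z - p))) k l p :=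
      Stmt4Aux.D2_congr_on hWopen hpW (fun z hz => hinvv z hz i j) k l
    rw [e1, Stmt4Aux.D2_comp_on A p hs hWopen hWs (hGsm i j) hpW k l]
    have e2 : ∀ c d : Fin n,
        D2 (fun w => ∑ a, ∑ b, A⁻¹ i a * A⁻¹ j b * invH u w a b) c d
          (p + A.mulVec (p - p))
        = ∑ a, ∑ b, A⁻¹ i a * A⁻¹ j b * D2 (fun y => invH u y a b) c d p := by
      intro c d
      rw [hφp]
      exact Stmt4Aux.D2_sum_const_mul hs _ _ (fun a b => hgsm a b) hp c d
    simp only [e2]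
    exact Stmt4Aux.exchange4 (fun c => A c k) (fun d => A d l)
      (fun a b => A⁻¹ i a * A⁻¹ j b) (fun a b c d => D2 (fun y => invH u y a b) c d p)
  -- assemble via Kronecker products and traces
  open Kronecker in
  rw [Stmt4Aux.Fsq_eq_trace v p, Stmt4Aux.Fsq_eq_trace u p]
  have hMv : (Matrix.of fun (ab : Fin n × Fin n) (cd : Fin n × Fin n) =>
        D2 (fun y => invH v y ab.1 ab.2) cd.1 cd.2 p)
      = (A⁻¹ ⊗ₖ A⁻¹) * (Matrix.of fun (ab : Fin n × Fin n) (cd : Fin n × Fin n) =>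
          D2 (fun y => invH u y ab.1 ab.2) cd.1 cd.2 p) * (A ⊗ₖ A) := by
    ext ⟨i, j⟩ ⟨k, l⟩
    rw [Matrix.of_apply, Stmt4Aux.entry_formula]
    exact key i j k l
  rw [hMv]
  exact Stmt4Aux.trace_conj hA rfl _

end
end

section
/- Let u be a smooth strictly convex function near a point p ∈ ℝⁿ such that at p the Hessian (u_{ij})(p) is the identity matrix. Then at p, (∂/∂x₁)² (u₁₁^{-1}) ≤ u^{11}_{,11}, where u^{11} is the (1,1) entry of the inverse Hessian matrix. Consequently (∂/∂x₁)²(u₁₁^{-1})(p) ≤ |F|(p) where |F|² = ∑_{i,j,k,l} (u^{ij}_{,kl})². -/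
open Matrix
open scoped BigOperators

noncomputable section
open Filter Set
open scoped ContDiff

/-! ### Auxiliary lemmas -/

lemma contDiffOn_pd' {n : ℕ} {s : Set (Fin n → ℝ)} (hs : IsOpen s)
    {f : (Fin n → ℝ) → ℝ} (hf : ContDiffOn ℝ ∞ f s) (i : Fin n) :
    ContDiffOn ℝ ∞ (pd f i) s :=
  (hf.fderiv_of_isOpen hs (by norm_num)).clm_apply contDiffOn_const

lemma contDiffOn_D2' {n : ℕ} {s : Set (Fin n → ℝ)} (hs : IsOpen s)
    {f : (Fin n → ℝ) → ℝ} (hf : ContDiffOn ℝ ∞ f s) (i j : Fin n) :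
    ContDiffOn ℝ ∞ (D2 f i j) s :=
  contDiffOn_pd' hs (contDiffOn_pd' hs hf i) j

lemma diffAt_of' {n : ℕ} {s : Set (Fin n → ℝ)} (hs : IsOpen s)
    {f : (Fin n → ℝ) → ℝ} (hf : ContDiffOn ℝ ∞ f s) {x} (hx : x ∈ s) :
    DifferentiableAt ℝ f x :=
  (hf.contDiffAt (hs.mem_nhds hx)).differentiableAt (by norm_num)

lemma contDiffOn_det' {n : ℕ} {s : Set (Fin n → ℝ)}
    {M : (Fin n → ℝ) → Matrix (Fin n) (Fin n) ℝ}
    (h : ∀ i j, ContDiffOn ℝ ∞ (fun y => M y i j) s) :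
    ContDiffOn ℝ ∞ (fun y => (M y).det) s := by
  simp only [Matrix.det_apply']
  exact ContDiffOn.sum fun σ _ =>
    contDiffOn_const.mul (contDiffOn_prod fun i _ => h (σ i) i)

lemma inv_entry_ge' {n : ℕ} {A : Matrix (Fin n) (Fin n) ℝ} (hA : A.PosDef) (i : Fin n) :
    (A i i)⁻¹ ≤ A⁻¹ i i := by
  have hB : (A⁻¹).PosDef := hA.inv
  set e : Fin n → ℝ := Pi.single i 1 with he
  have hene : e ≠ 0 := fun h => by simpa [he] using congrFun h i
  have hstar : ∀ x : Fin n → ℝ, star x = x := fun x => funext fun k => by simp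
  have ha : 0 < A i i := by
    have := hA.dotProduct_mulVec_pos hene
    simpa [hstar, he, dotProduct_single, Matrix.mulVec_single] using this
  have hq : 0 < A⁻¹ i i := by
    have := hB.dotProduct_mulVec_pos hene
    simpa [hstar, he, dotProduct_single, Matrix.mulVec_single] using this
  set q := A⁻¹ i i with hqdef
  set v : Fin n → ℝ := A⁻¹ *ᵥ e with hv
  have hdet : IsUnit A.det := hA.det_pos.ne'.isUnit
  have hAv : A *ᵥ v = e := by
    rw [hv, Matrix.mulVec_mulVec, Matrix.mul_nonsing_inv _ hdet, Matrix.one_mulVec]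
  have hAt : Aᵀ = A := by
    have := hA.1
    rwa [Matrix.IsHermitian, Matrix.conjTranspose] at this
  have h_ee : e ⬝ᵥ e = 1 := by simp [he, dotProduct_single]
  have h_ve : v ⬝ᵥ e = q := by
    simp [hv, he, dotProduct_single, Matrix.mulVec_single, hqdef]
  have h_eAe : e ⬝ᵥ (A *ᵥ e) = A i i := by
    simp [he, single_dotProduct, Matrix.mulVec_single]
  have h_eAv : e ⬝ᵥ (A *ᵥ v) = 1 := by rw [hAv, h_ee]
  have hsymdot : ∀ x y : Fin n → ℝ, x ⬝ᵥ (A *ᵥ y) = (A *ᵥ x) ⬝ᵥ y := by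
    intro x y
    rw [Matrix.dotProduct_mulVec, ← Matrix.mulVec_transpose, hAt]
  have h_vAe : v ⬝ᵥ (A *ᵥ e) = 1 := by rw [hsymdot, hAv, h_ee]
  have h_vAv : v ⬝ᵥ (A *ᵥ v) = q := by rw [hsymdot, hAv, ← h_ve, dotProduct_comm]
  set w : Fin n → ℝ := e - q⁻¹ • v with hw
  have h0 : 0 ≤ w ⬝ᵥ (A *ᵥ w) := by
    have := hA.posSemidef.dotProduct_mulVec_nonneg w
    simpa [hstar] using this
  have hexp : w ⬝ᵥ (A *ᵥ w) = A i i - q⁻¹ := by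
    rw [hw]
    rw [Matrix.mulVec_sub, Matrix.mulVec_smul, sub_dotProduct,
      smul_dotProduct, dotProduct_sub, dotProduct_sub,
      dotProduct_smul, dotProduct_smul,
      h_eAe, h_eAv, h_vAe, h_vAv]
    simp only [smul_eq_mul]
    field_simp
    ring
  rw [hexp] at h0
  have h1 : (1:ℝ) ≤ A i i * q := by
    have := mul_le_mul_of_nonneg_right (sub_nonneg.mp h0) hq.le
    rwa [inv_mul_cancel₀ hq.ne'] at this
  have := mul_le_mul_of_nonneg_left h1 (inv_nonneg.mpr ha.le)
  rw [mul_one, ← mul_assoc, inv_mul_cancel₀ ha.ne', one_mul] at this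
  exact this

lemma four_sum_bound' {n : ℕ} (F : Fin n → Fin n → Fin n → Fin n → ℝ)
    (hF : ∀ i j k l, 0 ≤ F i j k l) (i0 : Fin n) :
    F i0 i0 i0 i0 ≤ ∑ i, ∑ j, ∑ k, ∑ l, F i j k l := by
  have hstep : ∀ (G : Fin n → ℝ), (∀ x, 0 ≤ G x) → ∀ i : Fin n, G i ≤ ∑ x, G x :=
    fun G hG i => Finset.single_le_sum (fun x _ => hG x) (Finset.mem_univ i)
  calc F i0 i0 i0 i0 ≤ ∑ l, F i0 i0 i0 l :=
      hstep (fun l => F i0 i0 i0 l) (fun _ => hF _ _ _ _) i0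
  _ ≤ ∑ k, ∑ l, F i0 i0 k l :=
      hstep (fun k => ∑ l, F i0 i0 k l)
        (fun _ => Finset.sum_nonneg fun _ _ => hF _ _ _ _) i0
  _ ≤ ∑ j, ∑ k, ∑ l, F i0 j k l :=
      hstep (fun j => ∑ k, ∑ l, F i0 j k l)
        (fun _ => Finset.sum_nonneg fun _ _ =>
        Finset.sum_nonneg fun _ _ => hF _ _ _ _) i0
  _ ≤ ∑ i, ∑ j, ∑ k, ∑ l, F i j k l :=
      hstep (fun i => ∑ j, ∑ k, ∑ l, F i j k l)
        (fun _ => Finset.sum_nonneg fun _ _ => Finset.sum_nonneg fun _ _ =>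
        Finset.sum_nonneg fun _ _ => hF _ _ _ _) i0

lemma second_deriv_nonneg_of_min' {φ ψ : ℝ → ℝ} {c : ℝ}
    (hmin : IsLocalMin φ 0)
    (hφ : ∀ᶠ t in nhds 0, HasDerivAt φ (ψ t) t)
    (hψ : HasDerivAt ψ c 0) : 0 ≤ c := by
  by_contra hc
  push_neg at hc
  have hψ0 : ψ 0 = 0 := hmin.hasDerivAt_eq_zero hφ.self_of_nhds
  have hslope : Tendsto (fun t => ψ t / t) (nhdsWithin 0 {(0:ℝ)}ᶜ) (nhds c) := by
    have h := hasDerivAt_iff_tendsto_slope.1 hψ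
    have : (slope ψ 0) = fun t => ψ t / t := by
      funext t; simp [slope_def_field, hψ0]
    rwa [this] at h
  have hneg : ∀ᶠ t in nhdsWithin 0 (Ioi (0:ℝ)), ψ t < 0 := by
    have h1 : ∀ᶠ t in nhdsWithin 0 {(0:ℝ)}ᶜ, ψ t / t < 0 :=
      hslope.eventually (gt_mem_nhds hc)
    have h2 : ∀ᶠ t in nhdsWithin 0 (Ioi (0:ℝ)), ψ t / t < 0 :=
      h1.filter_mono (nhdsWithin_mono 0 (fun t ht => ne_of_gt ht))
    filter_upwards [h2, self_mem_nhdsWithin] with t h ht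
    have ht' : (0:ℝ) < t := ht
    have : ψ t = (ψ t / t) * t := (div_mul_cancel₀ _ ht'.ne').symm
    rw [this]
    exact mul_neg_of_neg_of_pos h ht'
  obtain ⟨δ, hδ, hIoc⟩ := mem_nhdsGT_iff_exists_Ioc_subset.1 hneg
  have hδ' : (0:ℝ) < δ := hδ
  obtain ⟨ε, hε, hball⟩ := Metric.eventually_nhds_iff.1 (hφ.and hmin)
  set t₀ := min δ (ε/2) with ht₀
  have ht₀pos : 0 < t₀ := lt_min hδ' (by linarith)
  have hball' : ∀ x ∈ Icc (0:ℝ) t₀, HasDerivAt φ (ψ x) x ∧ φ 0 ≤ φ x := by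
    intro x hx
    apply hball
    rw [Real.dist_eq]
    have : |x| ≤ t₀ := by rw [abs_of_nonneg hx.1]; exact hx.2
    calc |x - 0| = |x| := by ring_nf
    _ ≤ t₀ := this
    _ < ε := lt_of_le_of_lt (min_le_right _ _) (by linarith)
  have hanti : StrictAntiOn φ (Icc 0 t₀) := by
    apply strictAntiOn_of_deriv_neg (convex_Icc 0 t₀)
    · exact fun x hx => ((hball' x hx).1.differentiableAt.continuousAt).continuousWithinAt
    · intro x hx
      rw [interior_Icc] at hx
      rw [(hball' x ⟨hx.1.le, hx.2.le⟩).1.deriv]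
      exact hIoc ⟨hx.1, le_trans hx.2.le (min_le_left _ _)⟩
  have h2 := hanti (left_mem_Icc.2 ht₀pos.le) (right_mem_Icc.2 ht₀pos.le) ht₀pos
  exact absurd (hball' t₀ (right_mem_Icc.2 ht₀pos.le)).2 (not_le.2 h2)

lemma D2_nonneg' {n : ℕ} {s : Set (Fin n → ℝ)} (hs : IsOpen s)
    {f : (Fin n → ℝ) → ℝ} (hf : ContDiffOn ℝ ∞ f s) {p : Fin n → ℝ} (hp : p ∈ s)
    (h0 : f p = 0) (hpos : ∀ x ∈ s, 0 ≤ f x) (i : Fin n) :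
    0 ≤ D2 f i i p := by
  set v : Fin n → ℝ := Pi.single i 1 with hvdef
  set L : ℝ → (Fin n → ℝ) := fun t => p + t • v with hLdef
  have hL0 : L 0 = p := by simp [hLdef]
  have hLd : ∀ t : ℝ, HasDerivAt L v t := by
    intro t
    have h1 : HasDerivAt (fun t : ℝ => t • v) ((1:ℝ) • v) t :=
      (hasDerivAt_id t).smul_const v
    simpa [hLdef] using (h1.const_add p)
  have hLcont : Continuous L := continuous_const.add (continuous_id.smul continuous_const)
  have hI : L ⁻¹' s ∈ nhds (0:ℝ) :=
    (hs.preimage hLcont).mem_nhds (by simp [hL0, hp])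
  set ψ : ℝ → ℝ := fun t => pd f i (L t) with hψdef
  have hφ : ∀ᶠ t in nhds 0, HasDerivAt (fun t => f (L t)) (ψ t) t := by
    filter_upwards [hI] with t ht
    have hdf : DifferentiableAt ℝ f (L t) := diffAt_of' hs hf ht
    have := hdf.hasFDerivAt.comp_hasDerivAt t (hLd t)
    simpa [hψdef, pd, Function.comp_def, hvdef] using this
  have hψd : HasDerivAt ψ (D2 f i i p) 0 := by
    have hpdiff : DifferentiableAt ℝ (pd f i) p := diffAt_of' hs (contDiffOn_pd' hs hf i) hp
    rw [← hL0] at hpdiff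
    have := hpdiff.hasFDerivAt.comp_hasDerivAt 0 (hLd 0)
    rw [hL0] at this
    simpa [hψdef, D2, pd, Function.comp_def, hvdef] using this
  have hmin : IsLocalMin (fun t => f (L t)) 0 := by
    filter_upwards [hI] with t ht
    simpa [hL0, h0] using hpos _ ht
  exact second_deriv_nonneg_of_min' hmin hφ hψd

lemma D2_sub' {n : ℕ} {s : Set (Fin n → ℝ)} (hs : IsOpen s)
    {f g : (Fin n → ℝ) → ℝ} (hf : ContDiffOn ℝ ∞ f s) (hg : ContDiffOn ℝ ∞ g s)
    {p : Fin n → ℝ} (hp : p ∈ s) (i j : Fin n) :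
    D2 (fun x => f x - g x) i j p = D2 f i j p - D2 g i j p := by
  have hev : pd (fun x => f x - g x) i =ᶠ[nhds p] fun x => pd f i x - pd g i x := by
    filter_upwards [hs.mem_nhds hp] with x hx
    show fderiv ℝ (fun x => f x - g x) x (Pi.single i 1) = _
    rw [fderiv_fun_sub (diffAt_of' hs hf hx) (diffAt_of' hs hg hx)]
    rfl
  have h1 : DifferentiableAt ℝ (pd f i) p := diffAt_of' hs (contDiffOn_pd' hs hf i) hp
  have h2 : DifferentiableAt ℝ (pd g i) p := diffAt_of' hs (contDiffOn_pd' hs hg i) hp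
  show fderiv ℝ (pd (fun x => f x - g x) i) p (Pi.single j 1) = _
  rw [hev.fderiv_eq, fderiv_fun_sub h1 h2]
  rfl

/-- if at `p` the Hessian of `u` is the identity, then
`(∂/∂x₁)²(u₁₁⁻¹)(p) ≤ u^{11}_{,11}(p)` and hence
`(∂/∂x₁)²(u₁₁⁻¹)(p) ≤ |F|(p)` where `|F|² = ∑ (u^{ij}_{,kl})²`. -/
theorem stmt5 (n : ℕ) (hn : 0 < n) (s : Set (Fin n → ℝ)) (hs : IsOpen s)
    (u : (Fin n → ℝ) → ℝ) (p : Fin n → ℝ) (hp : p ∈ s)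
    (hsmooth : ContDiffOn ℝ (⊤ : ℕ∞) u s)
    (hconv : ∀ x ∈ s, (hessM u x).PosDef)
    (hid : hessM u p = 1) :
    D2 (fun x => (hessM u x ⟨0, hn⟩ ⟨0, hn⟩)⁻¹) ⟨0, hn⟩ ⟨0, hn⟩ p ≤
        D2 (fun x => invH u x ⟨0, hn⟩ ⟨0, hn⟩) ⟨0, hn⟩ ⟨0, hn⟩ p ∧
      D2 (fun x => (hessM u x ⟨0, hn⟩ ⟨0, hn⟩)⁻¹) ⟨0, hn⟩ ⟨0, hn⟩ p ≤
        Real.sqrt (∑ i, ∑ j, ∑ k, ∑ l,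
          (D2 (fun y => invH u y i j) k l p) ^ 2) := by
  set i0 : Fin n := ⟨0, hn⟩
  have hsm : ContDiffOn ℝ ∞ u s := hsmooth.of_le (by simp)
  have hentries : ∀ i j : Fin n, ContDiffOn ℝ ∞ (fun y => hessM u y i j) s :=
    fun i j => contDiffOn_D2' hs hsm i j
  have hdet_s : ContDiffOn ℝ ∞ (fun y => (hessM u y).det) s := contDiffOn_det' hentries
  have hdetne : ∀ x ∈ s, (hessM u x).det ≠ 0 := fun x hx => (hconv x hx).det_pos.ne'
  have hadj : ∀ i j : Fin n, ContDiffOn ℝ ∞ (fun y => (hessM u y).adjugate i j) s := by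
    intro i j
    simp only [Matrix.adjugate_apply]
    apply contDiffOn_det'
    intro k l
    by_cases hkj : k = j
    · simp only [Matrix.updateRow_apply, hkj, if_true]
      exact contDiffOn_const
    · simp only [Matrix.updateRow_apply, hkj, if_false]
      exact hentries k l
  have hinv_entry : ∀ i j : Fin n, ContDiffOn ℝ ∞ (fun y => invH u y i j) s := by
    intro i j
    have heq : (fun y => invH u y i j)
        = fun y => ((hessM u y).det)⁻¹ * (hessM u y).adjugate i j := by
      funext y
      rw [invH, Matrix.inv_def, Ring.inverse_eq_inv']
      simp [Matrix.smul_apply, smul_eq_mul]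
    rw [heq]
    exact (hdet_s.inv hdetne).mul (hadj i j)
  have hdiag : ∀ x ∈ s, 0 < hessM u x i0 i0 := by
    intro x hx
    set e : Fin n → ℝ := Pi.single i0 1 with he
    have hene : e ≠ 0 := fun h => by simpa [he] using congrFun h i0
    have hstar : ∀ z : Fin n → ℝ, star z = z := fun z => funext fun k => by simp
    have h := (hconv x hx).dotProduct_mulVec_pos hene
    simpa [hstar, he, dotProduct_single, Matrix.mulVec_single] using h
  have hb : ContDiffOn ℝ ∞ (fun y => (hessM u y i0 i0)⁻¹) s :=
    (hentries i0 i0).inv (fun x hx => (hdiag x hx).ne')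
  -- the nonnegative function g
  set g : (Fin n → ℝ) → ℝ := fun x => invH u x i0 i0 - (hessM u x i0 i0)⁻¹ with hgdef
  have hg0 : g p = 0 := by
    simp [hgdef, invH, hid, inv_one, Matrix.one_apply_eq]
  have hgpos : ∀ x ∈ s, 0 ≤ g x := by
    intro x hx
    exact sub_nonneg.2 (inv_entry_ge' (hconv x hx) i0)
  have hgsm : ContDiffOn ℝ ∞ g s := (hinv_entry i0 i0).sub hb
  have hD2g : 0 ≤ D2 g i0 i0 p := D2_nonneg' hs hgsm hp hg0 hgpos i0
  have hsplit : D2 g i0 i0 p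
      = D2 (fun x => invH u x i0 i0) i0 i0 p
        - D2 (fun x => (hessM u x i0 i0)⁻¹) i0 i0 p :=
    D2_sub' hs (hinv_entry i0 i0) hb hp i0 i0
  have hfirst : D2 (fun x => (hessM u x i0 i0)⁻¹) i0 i0 p
      ≤ D2 (fun x => invH u x i0 i0) i0 i0 p := by
    rw [hsplit] at hD2g
    linarith
  refine ⟨hfirst, ?_⟩
  have h1 : (D2 (fun y => invH u y i0 i0) i0 i0 p) ^ 2
      ≤ ∑ i, ∑ j, ∑ k, ∑ l, (D2 (fun y => invH u y i j) k l p) ^ 2 :=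
    four_sum_bound' (fun i j k l => (D2 (fun y => invH u y i j) k l p) ^ 2)
      (fun i j k l => sq_nonneg _) i0
  have h2 : D2 (fun y => invH u y i0 i0) i0 i0 p
      ≤ Real.sqrt (∑ i, ∑ j, ∑ k, ∑ l, (D2 (fun y => invH u y i j) k l p) ^ 2) := by
    calc D2 (fun y => invH u y i0 i0) i0 i0 p ≤ |D2 (fun y => invH u y i0 i0) i0 i0 p| :=
        le_abs_self _
    _ = Real.sqrt ((D2 (fun y => invH u y i0 i0) i0 i0 p) ^ 2) :=
        (Real.sqrt_sq_eq_abs _).symm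
    _ ≤ _ := Real.sqrt_le_sqrt h1
  exact le_trans hfirst h2

end
end

section
/- Let H : [−R, R] → ℝ be a smooth positive function with ∫_{−R}^{R} H(t) dt ≤ M and (d²/dt²)(H(t)^{-1}) ≤ 1 for all t. Then H(0) ≤ max(2M/(πR), 2(M/π)²). -/
open Real Set intervalIntegral

lemma arctan_concave_bound (z : ℝ) (h0 : 0 ≤ z) (h1 : z ≤ 1) :
    Real.pi / 4 * z ≤ Real.arctan z := by
  have hconc : ConcaveOn ℝ (Set.Icc (0:ℝ) 1) Real.arctan := by
    apply concaveOn_of_deriv2_nonpos (convex_Icc 0 1)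
      Real.continuous_arctan.continuousOn
      (Real.differentiable_arctan.differentiableOn)
    · rw [Real.deriv_arctan]
      apply DifferentiableOn.div (differentiableOn_const _)
      · fun_prop
      · intro x _; positivity
    · intro x hx
      rw [interior_Icc] at hx
      have hb : HasDerivAt (fun x : ℝ => 1 + x ^ 2) (2 * x) x := by
        simpa using ((hasDerivAt_pow 2 x).const_add 1)
      have h1x : (1 : ℝ) + x ^ 2 ≠ 0 := by positivity
      have hd : HasDerivAt (fun x : ℝ => 1 / (1 + x ^ 2)) (-(2 * x) / (1 + x ^ 2) ^ 2) x := by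
        simpa [one_div, Pi.inv_def] using hb.inv h1x
      simp only [Function.iterate_succ_apply', Function.iterate_zero_apply, Function.iterate_one]
      rw [Real.deriv_arctan, hd.deriv]
      have : (0:ℝ) ≤ 2 * x := by linarith [hx.1]
      have h2 : (0:ℝ) < (1 + x ^ 2) ^ 2 := by positivity
      exact div_nonpos_of_nonpos_of_nonneg (by linarith) h2.le
  have key := hconc.2 (show (0:ℝ) ∈ Set.Icc (0:ℝ) 1 by simp)
    (show (1:ℝ) ∈ Set.Icc (0:ℝ) 1 by simp)
    (show (0:ℝ) ≤ 1 - z by linarith) h0 (show (1 - z) + z = 1 by ring)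
  have h2 : (1 - z) • ((0:ℝ)) + z • (1:ℝ) = z := by simp
  rw [h2] at key
  simpa [Real.arctan_zero, Real.arctan_one, smul_eq_mul, mul_comm] using key

/-- if `H` is smooth positive on `[−R,R]`, `∫_{−R}^R H ≤ M`,
and `(H⁻¹)'' ≤ 1` on `[−R,R]`, then `H(0) ≤ max(2M/(πR), 2(M/π)²)`. -/
theorem stmt6 (R M : ℝ) (hR : 0 < R) (hM : 0 < M) (H : ℝ → ℝ)
    (hsmooth : ContDiffOn ℝ (⊤ : ℕ∞) H (Set.Icc (-R) R))
    (hpos : ∀ t ∈ Set.Icc (-R) R, 0 < H t)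
    (hint : ∫ t in (-R)..R, H t ≤ M)
    (hconc : ∀ t ∈ Set.Icc (-R) R, deriv (deriv (fun s => (H s)⁻¹)) t ≤ 1) :
    H 0 ≤ max (2 * M / (Real.pi * R)) (2 * (M / Real.pi) ^ 2) := by
  set G : ℝ → ℝ := fun s => (H s)⁻¹ with hGdef
  have hIccsub : Set.Ioo (-R) R ⊆ Set.Icc (-R) R := Set.Ioo_subset_Icc_self
  have hGc : ContDiffOn ℝ (⊤ : ℕ∞) G (Set.Icc (-R) R) :=
    hsmooth.inv (fun t ht => (hpos t ht).ne')
  have hGS : ContDiffOn ℝ (⊤ : ℕ∞) G (Set.Ioo (-R) R) := hGc.mono hIccsub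
  have hG1 : ContDiffOn ℝ (⊤ : ℕ∞) (deriv G) (Set.Ioo (-R) R) :=
    hGS.deriv_of_isOpen isOpen_Ioo (by simp)
  have hGd : ∀ x ∈ Set.Ioo (-R) R, HasDerivAt G (deriv G x) x := fun x hx =>
    ((hGS.differentiableOn (by simp)).differentiableAt (isOpen_Ioo.mem_nhds hx)).hasDerivAt
  have hG1d : ∀ x ∈ Set.Ioo (-R) R, HasDerivAt (deriv G) (deriv (deriv G) x) x := fun x hx =>
    ((hG1.differentiableOn (by simp)).differentiableAt (isOpen_Ioo.mem_nhds hx)).hasDerivAt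
  have h0mem : (0:ℝ) ∈ Set.Ioo (-R) R := ⟨by linarith, hR⟩
  set ε : ℝ := G 0 with hεdef
  set C : ℝ := deriv G 0 with hCdef
  have hε : 0 < ε := inv_pos.mpr (hpos 0 (hIccsub h0mem))
  -- φ' and its monotonicity
  set φ' : ℝ → ℝ := fun t => C + t - deriv G t with hφ'def
  have hφ'd : ∀ x ∈ Set.Ioo (-R) R, HasDerivAt φ' (1 - deriv (deriv G) x) x := by
    intro x hx
    have := ((hasDerivAt_id x).const_add C).sub (hG1d x hx)
    simpa [Pi.sub_def] using this
  have hφ'mono : MonotoneOn φ' (Set.Ioo (-R) R) := by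
    apply monotoneOn_of_deriv_nonneg (convex_Ioo _ _)
    · exact fun x hx => (hφ'd x hx).differentiableAt.continuousAt.continuousWithinAt
    · rw [interior_Ioo]
      exact fun x hx => ((hφ'd x hx).differentiableAt).differentiableWithinAt
    · rw [interior_Ioo]
      intro x hx
      rw [(hφ'd x hx).deriv]
      have := hconc x (hIccsub hx)
      linarith
  have hφ'0 : φ' 0 = 0 := by simp [hφ'def, hCdef]
  -- φ and the Taylor bound
  set φ : ℝ → ℝ := fun t => ε + C * t + t ^ 2 / 2 - G t with hφdef
  have hφd : ∀ x ∈ Set.Ioo (-R) R, HasDerivAt φ (φ' x) x := by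
    intro x hx
    have hp : HasDerivAt (fun t : ℝ => ε + C * t + t ^ 2 / 2) (C + x) x := by
      have h1 : HasDerivAt (fun t : ℝ => ε + C * t) C x := by
        simpa using ((hasDerivAt_id x).const_mul C).const_add ε
      have h2 : HasDerivAt (fun t : ℝ => t ^ 2 / 2) x x := by
        simpa using (hasDerivAt_pow 2 x).div_const 2
      simpa [Pi.add_def] using h1.add h2
    simpa [hφ'def, Pi.sub_def] using hp.sub (hGd x hx)
  have hφcont : ContinuousOn φ (Set.Icc (-R) R) := by
    apply ContinuousOn.sub _ hGc.continuousOn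
    fun_prop
  have hφ0 : φ 0 = 0 := by simp [hφdef, hεdef]
  have hsub1 : Set.Icc (0:ℝ) R ⊆ Set.Icc (-R) R := Set.Icc_subset_Icc (by linarith) le_rfl
  have hsub2 : Set.Icc (-R) (0:ℝ) ⊆ Set.Icc (-R) R := Set.Icc_subset_Icc le_rfl (by linarith)
  have hsub1' : Set.Ioo (0:ℝ) R ⊆ Set.Ioo (-R) R := Set.Ioo_subset_Ioo (by linarith) le_rfl
  have hsub2' : Set.Ioo (-R) (0:ℝ) ⊆ Set.Ioo (-R) R := Set.Ioo_subset_Ioo le_rfl (by linarith)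
  have hmono : MonotoneOn φ (Set.Icc 0 R) := by
    apply monotoneOn_of_deriv_nonneg (convex_Icc _ _) (hφcont.mono hsub1)
    · rw [interior_Icc]
      exact fun x hx => (hφd x (hsub1' hx)).differentiableAt.differentiableWithinAt
    · rw [interior_Icc]
      intro x hx
      rw [(hφd x (hsub1' hx)).deriv]
      have := hφ'mono h0mem (hsub1' hx) hx.1.le
      linarith [hφ'0]
  have hanti : AntitoneOn φ (Set.Icc (-R) 0) := by
    apply antitoneOn_of_deriv_nonpos (convex_Icc _ _) (hφcont.mono hsub2)
    · rw [interior_Icc]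
      exact fun x hx => (hφd x (hsub2' hx)).differentiableAt.differentiableWithinAt
    · rw [interior_Icc]
      intro x hx
      rw [(hφd x (hsub2' hx)).deriv]
      have := hφ'mono (hsub2' hx) h0mem hx.2.le
      linarith [hφ'0]
  have hkey : ∀ t ∈ Set.Icc (-R) R, G t ≤ ε + C * t + t ^ 2 / 2 := by
    intro t ht
    rcases le_total 0 t with h | h
    · have := hmono (Set.left_mem_Icc.mpr hR.le) ⟨h, ht.2⟩ h
      rw [hφ0] at this
      simp only [hφdef] at this
      linarith
    · have := hanti ⟨ht.1, h⟩ (Set.right_mem_Icc.mpr (by linarith)) h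
      rw [hφ0] at this
      simp only [hφdef] at this
      linarith
  -- pointwise bound on [0, R]
  have hpt : ∀ x ∈ Set.Icc (0:ℝ) R, 2 / (ε + x ^ 2 / 2) ≤ H x + H (-x) := by
    intro x hx
    have hxI : x ∈ Set.Icc (-R) R := ⟨by linarith [hx.1], hx.2⟩
    have hxI' : -x ∈ Set.Icc (-R) R := ⟨by linarith [hx.2], by linarith [hx.1]⟩
    set a : ℝ := ε + x ^ 2 / 2 with hadef
    have hGx : 0 < G x := inv_pos.mpr (hpos x hxI)
    have hGx' : 0 < G (-x) := inv_pos.mpr (hpos (-x) hxI')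
    have b1 : G x ≤ a + C * x := by have := hkey x hxI; simp only [hadef]; linarith
    have b2 : G (-x) ≤ a - C * x := by
      have := hkey (-x) hxI'; simp only [hadef]; nlinarith [this]
    have hab1 : 0 < a + C * x := lt_of_lt_of_le hGx b1
    have hab2 : 0 < a - C * x := lt_of_lt_of_le hGx' b2
    have ha : 0 < a := by positivity
    have hH1 : (a + C * x)⁻¹ ≤ H x := by
      have h := inv_anti₀ hGx b1
      rwa [hGdef, inv_inv] at h
    have hH2 : (a - C * x)⁻¹ ≤ H (-x) := by
      have h := inv_anti₀ hGx' b2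
      rwa [hGdef, inv_inv] at h
    have hsum : 2 / a ≤ (a + C * x)⁻¹ + (a - C * x)⁻¹ := by
      rw [inv_eq_one_div, inv_eq_one_div, div_add_div _ _ (ne_of_gt hab1) (ne_of_gt hab2),
        div_le_div_iff₀ ha (by positivity)]
      nlinarith [sq_nonneg (C * x)]
    calc 2 / a ≤ (a + C * x)⁻¹ + (a - C * x)⁻¹ := hsum
      _ ≤ H x + H (-x) := add_le_add hH1 hH2
  -- integrability
  have hHcont : ContinuousOn H (Set.Icc (-R) R) := hsmooth.continuousOn
  have huIcc1 : Set.uIcc (0:ℝ) R = Set.Icc 0 R := Set.uIcc_of_le hR.le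
  have huIcc2 : Set.uIcc (-R) (0:ℝ) = Set.Icc (-R) 0 := Set.uIcc_of_le (by linarith)
  have hInt1 : IntervalIntegrable H MeasureTheory.volume 0 R := by
    apply ContinuousOn.intervalIntegrable
    rw [huIcc1]; exact hHcont.mono hsub1
  have hInt0 : IntervalIntegrable H MeasureTheory.volume (-R) 0 := by
    apply ContinuousOn.intervalIntegrable
    rw [huIcc2]; exact hHcont.mono hsub2
  have hInt2 : IntervalIntegrable (fun t => H (-t)) MeasureTheory.volume 0 R := by
    apply ContinuousOn.intervalIntegrable
    rw [huIcc1]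
    apply (hHcont.mono hsub2).comp continuous_neg.continuousOn
    intro t ht
    have h1 : 0 ≤ t := ht.1
    have h2 : t ≤ R := ht.2
    show -t ∈ Set.Icc (-R) 0
    exact ⟨by linarith, by linarith⟩
  set c : ℝ := Real.sqrt (2 * ε) with hcdef
  have hc : 0 < c := Real.sqrt_pos.mpr (by linarith)
  have hc2 : c ^ 2 = 2 * ε := Real.sq_sqrt (by linarith)
  have hfeq : ∀ t : ℝ, 2 / (ε + t ^ 2 / 2) = (2 / ε) * (1 + (t / c) ^ 2)⁻¹ := by
    intro t
    rw [div_pow, hc2]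
    rw [eq_comm, mul_inv_eq_iff_eq_mul₀ (by positivity)]
    field_simp
  have hIntL : IntervalIntegrable (fun t : ℝ => 2 / (ε + t ^ 2 / 2))
      MeasureTheory.volume 0 R := by
    apply Continuous.intervalIntegrable
    apply continuous_const.div (by fun_prop)
    intro x; positivity
  -- integral computation
  have hval : ∫ t in (0:ℝ)..R, 2 / (ε + t ^ 2 / 2) = (2 / ε) * (c * Real.arctan (R / c)) := by
    have e1 : ∫ t in (0:ℝ)..R, 2 / (ε + t ^ 2 / 2)
        = (2 / ε) * ∫ t in (0:ℝ)..R, (1 + (t / c) ^ 2)⁻¹ := by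
      rw [← intervalIntegral.integral_const_mul]
      apply intervalIntegral.integral_congr
      intro t _
      exact hfeq t
    rw [e1]
    have e2 : ∫ t in (0:ℝ)..R, (fun x : ℝ => (1 + x ^ 2)⁻¹) (t / c)
        = c • ∫ x in (0:ℝ)/c..R/c, (1 + x ^ 2)⁻¹ :=
      intervalIntegral.integral_comp_div (fun x : ℝ => (1 + x ^ 2)⁻¹) hc.ne'
    simp only [] at e2
    rw [e2, integral_inv_one_add_sq]
    rw [zero_div, Real.arctan_zero, sub_zero, smul_eq_mul]
  -- combine: (2/ε) * (c * arctan (R/c)) ≤ M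
  have hML : (2 / ε) * (c * Real.arctan (R / c)) ≤ M := by
    rw [← hval]
    have step1 : ∫ t in (0:ℝ)..R, 2 / (ε + t ^ 2 / 2)
        ≤ ∫ t in (0:ℝ)..R, (H t + H (-t)) :=
      intervalIntegral.integral_mono_on hR.le hIntL (hInt1.add hInt2) hpt
    have step2 : ∫ t in (0:ℝ)..R, (H t + H (-t))
        = (∫ t in (0:ℝ)..R, H t) + ∫ t in (0:ℝ)..R, H (-t) :=
      intervalIntegral.integral_add hInt1 hInt2
    have step3 : ∫ t in (0:ℝ)..R, H (-t) = ∫ t in (-R)..(0:ℝ), H t := by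
      have := intervalIntegral.integral_comp_neg (a := (0:ℝ)) (b := R) (fun t => H t)
      simpa using this
    have step4 : (∫ t in (-R)..(0:ℝ), H t) + ∫ t in (0:ℝ)..R, H t = ∫ t in (-R)..R, H t :=
      intervalIntegral.integral_add_adjacent_intervals hInt0 hInt1
    calc ∫ t in (0:ℝ)..R, 2 / (ε + t ^ 2 / 2) ≤ ∫ t in (0:ℝ)..R, (H t + H (-t)) := step1
      _ = ∫ t in (-R)..R, H t := by rw [step2, step3]; linarith [step4]
      _ ≤ M := hint
  -- final arithmetic
  have hπ : 0 < Real.pi := Real.pi_pos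
  have hH0 : 0 < H 0 := hpos 0 (hIccsub h0mem)
  have hεH : ε * H 0 = 1 := by
    show (H 0)⁻¹ * H 0 = 1
    exact inv_mul_cancel₀ hH0.ne'
  rcases le_total c R with hcR | hcR
  · -- c ≤ R : use arctan(R/c) ≥ π/4
    apply le_max_of_le_right
    have harc : Real.pi / 4 ≤ Real.arctan (R / c) := by
      rw [← Real.arctan_one]
      exact Real.arctan_strictMono.monotone ((one_le_div hc).mpr hcR)
    have hM2 : (2 / ε) * (c * (Real.pi / 4)) ≤ M := by
      refine le_trans ?_ hML
      apply mul_le_mul_of_nonneg_left _ (by positivity)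
      exact mul_le_mul_of_nonneg_left harc hc.le
    -- c * π / (2 ε) ≤ M, i.e. c * π ≤ 2 M ε
    have hq : c * Real.pi ≤ 2 * (M * ε) := by
      have heq2 : (2 / ε) * (c * (Real.pi / 4)) = c * Real.pi / (2 * ε) := by
        field_simp
        ring
      rw [heq2] at hM2
      have h := (div_le_iff₀ (show (0:ℝ) < 2 * ε by linarith)).1 hM2
      rw [show M * (2 * ε) = 2 * (M * ε) by ring] at h
      exact h
    have h2 : (c * Real.pi) * (c * Real.pi) ≤ (2 * (M * ε)) * (2 * (M * ε)) :=
      mul_le_mul hq hq (by positivity) (by positivity)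
    have h2' : 2 * ε * Real.pi ^ 2 ≤ 4 * M ^ 2 * ε ^ 2 := by
      have hcc : c * Real.pi * (c * Real.pi) = c ^ 2 * Real.pi ^ 2 := by ring
      rw [hcc, hc2, show 2 * (M * ε) * (2 * (M * ε)) = 4 * M ^ 2 * ε ^ 2 by ring] at h2
      exact h2
    have h3 : Real.pi ^ 2 ≤ 2 * M ^ 2 * ε := by
      have h6 : (2 * ε) * (2 * M ^ 2 * ε) = 4 * M ^ 2 * ε ^ 2 := by ring
      exact le_of_mul_le_mul_left (by rw [h6]; exact h2') (show (0:ℝ) < 2 * ε by linarith)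
    have hgoal : H 0 * Real.pi ^ 2 ≤ 2 * M ^ 2 := by
      have h4 : H 0 * Real.pi ^ 2 ≤ H 0 * (2 * M ^ 2 * ε) := mul_le_mul_of_nonneg_left h3 hH0.le
      have h5 : H 0 * (2 * M ^ 2 * ε) = 2 * M ^ 2 * (ε * H 0) := by ring
      rw [h5, hεH, mul_one] at h4
      exact h4
    have : 2 * (M / Real.pi) ^ 2 = 2 * M ^ 2 / Real.pi ^ 2 := by ring
    rw [this, le_div_iff₀ (by positivity)]
    linarith
  · -- R ≤ c : use arctan(R/c) ≥ (π/4)(R/c)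
    apply le_max_of_le_left
    have hz0 : 0 ≤ R / c := by positivity
    have hz1 : R / c ≤ 1 := (div_le_one hc).mpr hcR
    have harc := arctan_concave_bound (R / c) hz0 hz1
    have hM2 : (2 / ε) * (c * (Real.pi / 4 * (R / c))) ≤ M := by
      refine le_trans ?_ hML
      apply mul_le_mul_of_nonneg_left _ (by positivity)
      exact mul_le_mul_of_nonneg_left harc hc.le
    have heq : (2 / ε) * (c * (Real.pi / 4 * (R / c))) = Real.pi * R / (2 * ε) := by
      field_simp
      ring
    rw [heq] at hM2
    have hq : Real.pi * R ≤ 2 * (M * ε) := by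
      have h := (div_le_iff₀ (show (0:ℝ) < 2 * ε by linarith)).1 hM2
      rw [show M * (2 * ε) = 2 * (M * ε) by ring] at h
      exact h
    rw [le_div_iff₀ (by positivity)]
    have h4 : H 0 * (Real.pi * R) ≤ H 0 * (2 * (M * ε)) := mul_le_mul_of_nonneg_left hq hH0.le
    have h5 : H 0 * (2 * (M * ε)) = 2 * M * (ε * H 0) := by ring
    rw [h5, hεH, mul_one] at h4
    linarith
end

section
/- Let λ : (0, t₀] → ℝ be a differentiable function satisfying the Riccati inequality λ' + λ² ≤ 1. Then λ(t₀) ≤ cosh(t₀)/sinh(t₀) = coth(t₀). -/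
/-!
Comparing with the solutions `coth (t - τ)` of `μ' + μ² = 1`: the quantity
`φ(t) = sinh² (t - τ) λ(t) - sinh (t - τ) cosh (t - τ)` satisfies
`φ' = sinh² (t - τ) (λ' + λ² - 1) - (sinh (t - τ) λ - cosh (t - τ))² ≤ 0` and vanishes at `τ`,
so `φ(t₀) ≤ 0`, i.e. `sinh (t₀ - τ) λ(t₀) ≤ cosh (t₀ - τ)` for every `τ ∈ (0, t₀)`.
Letting `τ → 0⁺` gives `λ(t₀) ≤ coth t₀`.
-/

open Real Set Filter Topology

lemma hasDerivAt_sinh_sq_mul_sub_sinh_mul_cosh (a : ℝ) {lam : ℝ → ℝ} {l t : ℝ}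
    (h : HasDerivAt lam l t) :
    HasDerivAt (fun t => sinh (t - a) ^ 2 * lam t - sinh (t - a) * cosh (t - a))
      (sinh (t - a) ^ 2 * (l + lam t ^ 2 - 1) - (sinh (t - a) * lam t - cosh (t - a)) ^ 2) t := by
  have hs : HasDerivAt (fun t => sinh (t - a)) (cosh (t - a)) t := by
    simpa using (hasDerivAt_sub_const_iff a).mpr (hasDerivAt_id t) |>.sinh
  have hc : HasDerivAt (fun t => cosh (t - a)) (sinh (t - a)) t := by
    simpa using (hasDerivAt_sub_const_iff a).mpr (hasDerivAt_id t) |>.cosh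
  refine (((hs.fun_pow 2).fun_mul h).fun_sub (hs.fun_mul hc)).congr_deriv ?_
  push_cast
  ring

theorem sinh_mul_le_cosh_of_riccati {a b : ℝ} (hab : a < b) {lam lam' : ℝ → ℝ}
    (hderiv : ∀ t ∈ Icc a b, HasDerivAt lam (lam' t) t)
    (hriccati : ∀ t ∈ Icc a b, lam' t + lam t ^ 2 ≤ 1) :
    sinh (b - a) * lam b ≤ cosh (b - a) := by
  set φ := fun t => sinh (t - a) ^ 2 * lam t - sinh (t - a) * cosh (t - a)
  have hφ : ∀ t ∈ Icc a b, HasDerivAt φ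
      (sinh (t - a) ^ 2 * (lam' t + lam t ^ 2 - 1) - (sinh (t - a) * lam t - cosh (t - a)) ^ 2) t :=
    fun t ht => hasDerivAt_sinh_sq_mul_sub_sinh_mul_cosh a (hderiv t ht)
  have hanti : AntitoneOn φ (Icc a b) := by
    refine antitoneOn_of_hasDerivWithinAt_nonpos (convex_Icc a b)
      (fun t ht => (hφ t ht).continuousAt.continuousWithinAt)
      (fun t ht => (hφ t (interior_subset ht)).hasDerivWithinAt) fun t ht => ?_
    have := hriccati t (interior_subset ht)
    nlinarith [sq_nonneg (sinh (t - a)), sq_nonneg (sinh (t - a) * lam t - cosh (t - a))]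
  have hφb : φ b ≤ φ a := hanti (left_mem_Icc.mpr hab.le) (right_mem_Icc.mpr hab.le) hab.le
  have hsinh : 0 < sinh (b - a) := sinh_pos_iff.mpr (sub_pos.mpr hab)
  simp only [φ, sub_self, sinh_zero] at hφb
  nlinarith

/-- a differentiable function on `(0, t₀]` satisfying the
Riccati inequality `λ' + λ² ≤ 1` satisfies `λ(t₀) ≤ cosh t₀ / sinh t₀`. -/
theorem stmt8 (t₀ : ℝ) (ht₀ : 0 < t₀) (lam lam' : ℝ → ℝ)
    (hderiv : ∀ t ∈ Set.Ioc (0 : ℝ) t₀, HasDerivAt lam (lam' t) t)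
    (hriccati : ∀ t ∈ Set.Ioc (0 : ℝ) t₀, lam' t + (lam t) ^ 2 ≤ 1) :
    lam t₀ ≤ Real.cosh t₀ / Real.sinh t₀ := by
  have hshift : ∀ᶠ τ in 𝓝[>] 0, sinh (t₀ - τ) * lam t₀ ≤ cosh (t₀ - τ) := by
    filter_upwards [Ioo_mem_nhdsGT ht₀] with τ hτ
    have hsub : Icc τ t₀ ⊆ Ioc 0 t₀ := Icc_subset_Ioc_iff hτ.2.le |>.mpr ⟨hτ.1, le_rfl⟩
    exact sinh_mul_le_cosh_of_riccati hτ.2 (fun t ht => hderiv t (hsub ht))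
      (fun t ht => hriccati t (hsub ht))
  have hlim : sinh t₀ * lam t₀ ≤ cosh t₀ := by
    refine le_of_tendsto_of_tendsto ?_ ?_ hshift <;> apply tendsto_nhdsWithin_of_tendsto_nhds
    · exact (by fun_prop : Continuous fun τ => sinh (t₀ - τ) * lam t₀).tendsto' 0 _ (by simp)
    · exact (by fun_prop : Continuous fun τ => cosh (t₀ - τ)).tendsto' 0 _ (by simp)
  rwa [le_div_iff₀' (sinh_pos_iff.mpr ht₀)]
end

section
/- Let H : [0,∞) → ℝ be a smooth positive function with (d²/dt²)(H(t)^{-1}) ≤ 1 and suppose for some ε > 0 that ∫_{−1}^{1} H(x+t) dt < 2ε (i.e. the integral of H over any unit-length interval far out is small). Then H(x) ≤ max(4ε/π, (4ε/π)²). -/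
open Set intervalIntegral Real

private lemma stmt18_amhm (p q P : ℝ) (hp : 0 < p) (hq : 0 < q) (h : p + q ≤ P) :
    4 / P ≤ 1 / p + 1 / q := by
  have hP : 0 < P := lt_of_lt_of_le (by linarith) h
  rw [div_add_div _ _ hp.ne' hq.ne', div_le_div_iff₀ hP (mul_pos hp hq)]
  nlinarith [sq_nonneg (p - q)]

/-- if `H` is smooth and positive on `[x−1, x+1]` with
`(H⁻¹)'' ≤ 1` there and `∫_{x−1}^{x+1} H < 2ε`, then
`H(x) ≤ max(4ε/π, (4ε/π)²)`. -/
theorem stmt18 (x ε : ℝ) (hε : 0 < ε) (H : ℝ → ℝ)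
    (hsmooth : ContDiffOn ℝ (⊤ : ℕ∞) H (Set.Icc (x - 1) (x + 1)))
    (hpos : ∀ t ∈ Set.Icc (x - 1) (x + 1), 0 < H t)
    (hconc : ∀ t ∈ Set.Icc (x - 1) (x + 1), deriv (deriv (fun s => (H s)⁻¹)) t ≤ 1)
    (hint : ∫ t in (x - 1)..(x + 1), H t < 2 * ε) :
    H x ≤ max (4 * ε / Real.pi) ((4 * ε / Real.pi) ^ 2) := by
  have hpi := Real.pi_pos
  set G : ℝ → ℝ := fun s => (H s)⁻¹ with hGdef
  have hxm : x ∈ Set.Icc (x - 1) (x + 1) := ⟨by linarith, by linarith⟩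
  have hA : 0 < H x := hpos x hxm
  have hGpos : ∀ t ∈ Set.Icc (x - 1) (x + 1), 0 < G t := fun t ht => inv_pos.2 (hpos t ht)
  have hG : ContDiffOn ℝ (⊤ : ℕ∞) G (Set.Icc (x - 1) (x + 1)) :=
    hsmooth.inv (fun t ht => (hpos t ht).ne')
  have hGo : ContDiffOn ℝ (⊤ : ℕ∞) G (Set.Ioo (x - 1) (x + 1)) := hG.mono Set.Ioo_subset_Icc_self
  have hG' : ContDiffOn ℝ (⊤ : ℕ∞) (deriv G) (Set.Ioo (x - 1) (x + 1)) :=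
    hGo.deriv_of_isOpen isOpen_Ioo (by simp)
  -- the auxiliary function g
  set g : ℝ → ℝ := fun t => G t - (t - x) ^ 2 / 2 with hgdef
  have hq : ∀ t : ℝ, HasDerivAt (fun s => (s - x) ^ 2 / 2) (t - x) t := by
    intro t
    have h1 : HasDerivAt (fun s : ℝ => (s - x) ^ 2) (2 * (t - x) ^ 1 * 1) t :=
      (((hasDerivAt_id t).sub_const x).pow 2)
    simpa using h1.div_const 2
  have hGat : ∀ t ∈ Set.Ioo (x - 1) (x + 1), DifferentiableAt ℝ G t := fun t ht =>
    (hG.contDiffAt (Icc_mem_nhds ht.1 ht.2)).differentiableAt (by simp)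
  have hdg : Set.EqOn (deriv g) (fun t => deriv G t - (t - x)) (Set.Ioo (x - 1) (x + 1)) := by
    intro t ht
    rw [hgdef]
    rw [deriv_fun_sub (hGat t ht) (hq t).differentiableAt, (hq t).deriv]
  have hdGat : ∀ t ∈ Set.Ioo (x - 1) (x + 1), DifferentiableAt ℝ (deriv G) t := fun t ht =>
    (hG'.contDiffAt (isOpen_Ioo.mem_nhds ht)).differentiableAt (by simp)
  have hdgev : ∀ t ∈ Set.Ioo (x - 1) (x + 1),
      deriv g =ᶠ[nhds t] fun s => deriv G s - (s - x) := fun t ht =>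
    Filter.eventuallyEq_of_mem (isOpen_Ioo.mem_nhds ht) hdg
  have hconcave : ConcaveOn ℝ (Set.Icc (x - 1) (x + 1)) g := by
    apply concaveOn_of_deriv2_nonpos (convex_Icc _ _)
    · exact (hG.continuousOn).sub ((continuous_pow 2 |>.comp (continuous_id.sub
        continuous_const)).div_const 2).continuousOn
    · rw [interior_Icc]
      exact fun t ht => ((hGat t ht).sub (hq t).differentiableAt).differentiableWithinAt
    · rw [interior_Icc]
      intro t ht
      have h3 : DifferentiableAt ℝ (fun s => deriv G s - (s - x)) t :=
        (hdGat t ht).sub (differentiableAt_id.sub (differentiableAt_const x))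
      exact (((hdgev t ht).differentiableAt_iff).2 h3).differentiableWithinAt
    · rw [interior_Icc]
      intro t ht
      show deriv (deriv g) t ≤ 0
      rw [(hdgev t ht).deriv_eq]
      rw [deriv_fun_sub (hdGat t ht) (differentiableAt_fun_id.fun_sub (differentiableAt_const x))]
      have hd1 : deriv (fun s : ℝ => s - x) t = 1 := by
        simpa using ((hasDerivAt_id t).sub_const x).deriv
      rw [hd1]
      have := hconc t (Set.Ioo_subset_Icc_self ht)
      linarith
  -- midpoint inequality
  have hmemp : ∀ t ∈ Set.Icc (0:ℝ) 1, x + t ∈ Set.Icc (x - 1) (x + 1) := fun t ht =>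
    ⟨by linarith [ht.1], by linarith [ht.2]⟩
  have hmemm : ∀ t ∈ Set.Icc (0:ℝ) 1, x - t ∈ Set.Icc (x - 1) (x + 1) := fun t ht =>
    ⟨by linarith [ht.2], by linarith [ht.1]⟩
  have hmid : ∀ t ∈ Set.Icc (0:ℝ) 1, G (x - t) + G (x + t) ≤ 2 * G x + t ^ 2 := by
    intro t ht
    have h := hconcave.2 (hmemm t ht) (hmemp t ht)
      (by norm_num : (0:ℝ) ≤ 1/2) (by norm_num : (0:ℝ) ≤ 1/2) (by norm_num)
    simp only [smul_eq_mul] at h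
    have he : (1/2 : ℝ) * (x - t) + (1/2) * (x + t) = x := by ring
    rw [he] at h
    have e1 : g (x - t) = G (x - t) - t ^ 2 / 2 := by
      show G (x - t) - (x - t - x) ^ 2 / 2 = _
      ring_nf
    have e2 : g (x + t) = G (x + t) - t ^ 2 / 2 := by
      show G (x + t) - (x + t - x) ^ 2 / 2 = _
      ring_nf
    have e3 : g x = G x := by
      show G x - (x - x) ^ 2 / 2 = _
      ring_nf
    rw [e1, e2, e3] at h
    linarith
  -- pointwise lower bound
  have hkey : ∀ t ∈ Set.Icc (0:ℝ) 1, 4 / (2 * G x + t ^ 2) ≤ H (x + t) + H (x - t) := by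
    intro t ht
    have hp := hGpos _ (hmemp t ht)
    have hq' := hGpos _ (hmemm t ht)
    have h := stmt18_amhm (G (x + t)) (G (x - t)) (2 * G x + t ^ 2) hp hq' (by linarith [hmid t ht])
    have e1 : 1 / G (x + t) = H (x + t) := by
      rw [one_div, hGdef]; exact inv_inv _
    have e2 : 1 / G (x - t) = H (x - t) := by
      rw [one_div, hGdef]; exact inv_inv _
    rw [e1, e2] at h
    linarith
  -- integrability and integral manipulations
  have hHc : ContinuousOn H (Set.Icc (x - 1) (x + 1)) := hsmooth.continuousOn
  have hcp : ContinuousOn (fun t => H (x + t)) (Set.Icc (-1 : ℝ) 1) := by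
    apply hHc.comp (continuous_const.add continuous_id).continuousOn
    intro t ht
    simp only [id_eq, Set.mem_Icc, Pi.add_apply, Pi.sub_apply] at ht ⊢
    constructor <;> linarith [ht.1, ht.2]
  have hcm : ContinuousOn (fun t => H (x - t)) (Set.Icc (-1 : ℝ) 1) := by
    apply hHc.comp (continuous_const.sub continuous_id).continuousOn
    intro t ht
    simp only [id_eq, Set.mem_Icc, Pi.add_apply, Pi.sub_apply] at ht ⊢
    constructor <;> linarith [ht.1, ht.2]
  have hiw : ∀ a b : ℝ, a ∈ Set.Icc (-1:ℝ) 1 → b ∈ Set.Icc (-1:ℝ) 1 → a ≤ b →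
      IntervalIntegrable (fun t => H (x + t)) MeasureTheory.volume a b ∧
      IntervalIntegrable (fun t => H (x - t)) MeasureTheory.volume a b := by
    intro a b ha hb hab
    have hsub : Set.uIcc a b ⊆ Set.Icc (-1:ℝ) 1 := by
      rw [Set.uIcc_of_le hab]
      exact Set.Icc_subset_Icc ha.1 hb.2
    exact ⟨(hcp.mono hsub).intervalIntegrable, (hcm.mono hsub).intervalIntegrable⟩
  -- rewrite the integral hypothesis
  have hsum : (∫ t in (0:ℝ)..1, (H (x + t) + H (x - t))) < 2 * ε := by
    have h1 : (∫ t in (-1:ℝ)..1, H (x + t)) = ∫ t in (x-1)..(x+1), H t := by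
      have he : x + -1 = x - 1 := by ring
      rw [intervalIntegral.integral_comp_add_left H x, he]
    have hiA := hiw (-1) 0 (by norm_num) (by norm_num) (by norm_num)
    have hiB := hiw 0 1 (by norm_num) (by norm_num) (by norm_num)
    have h2 : (∫ t in (-1:ℝ)..0, H (x + t)) + (∫ t in (0:ℝ)..1, H (x + t))
        = ∫ t in (-1:ℝ)..1, H (x + t) :=
      intervalIntegral.integral_add_adjacent_intervals hiA.1 hiB.1
    have h3 : (∫ t in (0:ℝ)..1, H (x - t)) = ∫ t in (-1:ℝ)..0, H (x + t) := by
      have h4 := intervalIntegral.integral_comp_neg (a := (0:ℝ)) (b := 1)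
        (fun t => H (x + t))
      simp only [neg_zero, neg_neg, ← sub_eq_add_neg] at h4
      exact h4
    rw [intervalIntegral.integral_add hiB.1 hiB.2, h3]
    linarith [hint, h1, h2]
  -- case split
  rcases le_or_gt 1 (2 * G x) with hcase | hcase
  · -- Case A: H x ≤ 2, use the bound on all of [0,1]
    have hGx : 0 < G x := hGpos x hxm
    have hlb : ∀ t ∈ Set.Icc (0:ℝ) 1,
        (2 / G x) * (1 / (1 + t ^ 2)) ≤ H (x + t) + H (x - t) := by
      intro t ht
      refine le_trans ?_ (hkey t ht)
      have h1 : (0:ℝ) < 1 + t ^ 2 := by positivity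
      have h2 : (0:ℝ) < 2 * G x + t ^ 2 := by positivity
      rw [div_mul_div_comm, div_le_div_iff₀ (by positivity) h2]
      nlinarith [sq_nonneg t]
    have hilb : IntervalIntegrable (fun t => (2 / G x) * (1 / (1 + t ^ 2)))
        MeasureTheory.volume 0 1 := by
      apply Continuous.intervalIntegrable
      have hd : ∀ t : ℝ, (1:ℝ) + t ^ 2 ≠ 0 := fun t => by positivity
      exact continuous_const.mul (continuous_const.div
        (continuous_const.add (continuous_pow 2)) hd)
    have hiB := hiw 0 1 (by norm_num) (by norm_num) (by norm_num)
    have hmono := intervalIntegral.integral_mono_on (by norm_num : (0:ℝ) ≤ 1) hilb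
      (hiB.1.add hiB.2) hlb
    have hval : (∫ t in (0:ℝ)..1, (2 / G x) * (1 / (1 + t ^ 2)))
        = (2 / G x) * (Real.pi / 4) := by
      rw [intervalIntegral.integral_const_mul, integral_one_div_one_add_sq]
      simp [Real.arctan_one, Real.arctan_zero]
    have hGH : 2 / G x = 2 * H x := by
      rw [hGdef]
      field_simp
    rw [hval, hGH] at hmono
    refine le_max_of_le_left ?_
    rw [le_div_iff₀ hpi]
    nlinarith
  · -- Case B: H x > 2, use the bound on [0, c] with c = sqrt (2 / H x)
    have hGx : 0 < G x := hGpos x hxm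
    set c := Real.sqrt (2 * G x) with hcdef
    have hc2 : c ^ 2 = 2 * G x := Real.sq_sqrt (by positivity)
    have hc0 : 0 < c := Real.sqrt_pos.2 (by positivity)
    have hc1 : c ≤ 1 := by nlinarith
    have hiac := hiw 0 c (by norm_num) ⟨by linarith, hc1⟩ hc0.le
    have hicb := hiw c 1 ⟨by linarith, hc1⟩ (by norm_num) hc1
    have hsplit : (∫ t in (0:ℝ)..c, (H (x + t) + H (x - t)))
        + (∫ t in c..1, (H (x + t) + H (x - t)))
        = ∫ t in (0:ℝ)..1, (H (x + t) + H (x - t)) :=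
      intervalIntegral.integral_add_adjacent_intervals (hiac.1.add hiac.2)
        (hicb.1.add hicb.2)
    have hnn : 0 ≤ ∫ t in c..1, (H (x + t) + H (x - t)) := by
      apply intervalIntegral.integral_nonneg hc1
      intro u hu
      have hu1 : u ∈ Set.Icc (0:ℝ) 1 := ⟨le_trans hc0.le hu.1, hu.2⟩
      exact add_nonneg (hpos _ (hmemp u hu1)).le (hpos _ (hmemm u hu1)).le
    have hlb : ∀ t ∈ Set.Icc (0:ℝ) c,
        (4 / c ^ 2) * (1 / (1 + (t / c) ^ 2)) ≤ H (x + t) + H (x - t) := by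
      intro t ht
      have ht1 : t ∈ Set.Icc (0:ℝ) 1 := ⟨ht.1, le_trans ht.2 hc1⟩
      refine le_trans ?_ (hkey t ht1)
      have heq : (4 / c ^ 2) * (1 / (1 + (t / c) ^ 2)) = 4 / (2 * G x + t ^ 2) := by
        rw [← hc2]
        field_simp
        all_goals ring
      rw [heq]
    have hilb : IntervalIntegrable (fun t => (4 / c ^ 2) * (1 / (1 + (t / c) ^ 2)))
        MeasureTheory.volume 0 c := by
      apply Continuous.intervalIntegrable
      have hd : ∀ t : ℝ, (1:ℝ) + (t / c) ^ 2 ≠ 0 := fun t => by positivity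
      exact continuous_const.mul (continuous_const.div
        (continuous_const.add ((continuous_id.div_const c).pow 2)) hd)
    have hmono := intervalIntegral.integral_mono_on hc0.le hilb
      (hiac.1.add hiac.2) hlb
    have hval : (∫ t in (0:ℝ)..c, (4 / c ^ 2) * (1 / (1 + (t / c) ^ 2)))
        = Real.pi / c := by
      rw [intervalIntegral.integral_const_mul]
      rw [intervalIntegral.integral_comp_div (fun u => 1 / (1 + u ^ 2)) hc0.ne']
      rw [zero_div, div_self hc0.ne', integral_one_div_one_add_sq]
      rw [Real.arctan_one, Real.arctan_zero]
      rw [smul_eq_mul]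
      field_simp
      ring
    rw [hval] at hmono
    have hπc : Real.pi < 2 * ε * c := by
      have : Real.pi / c < 2 * ε := by linarith
      rwa [div_lt_iff₀ hc0] at this
    have hAc2 : H x * c ^ 2 = 2 := by
      rw [hc2, hGdef]
      field_simp
    refine le_max_of_le_right ?_
    rw [div_pow, le_div_iff₀ (by positivity : (0:ℝ) < Real.pi ^ 2)]
    have h5 : Real.pi ^ 2 ≤ (2 * ε * c) ^ 2 := pow_le_pow_left₀ hpi.le hπc.le 2
    have h6 : H x * (2 * ε * c) ^ 2 = 8 * ε ^ 2 := by
      have : (2 * ε * c) ^ 2 = 4 * ε ^ 2 * c ^ 2 := by ring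
      rw [this]
      nlinarith [hAc2]
    nlinarith [mul_le_mul_of_nonneg_left h5 hA.le, hε, sq_nonneg ε]
end
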